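/- arXiv:0904.2497 — 9 statements merged into one kernel-verified Lean document; each statement's English description precedes it below -/
import Mathlib

section
/- Let Λ ≥ 0 and χ_b > 0. Let R : [0,χ_b] → ℝ be continuously differentiable with R twice continuously differentiable on (0,χ_b], R > 0 on (0,χ_b], R(0) = 0 and R'(0) = 1, and let ν : (0,χ_b] → ℝ be twice continuously differentiable. Define ρ, p, p⊥ and m from R, ν, Λ by the field equations and mass definition, and assume ρ ≥ 0, p ≥ 0 and p + 2p⊥ ≤ ρ on (0,χ_b]. If χ ∈ (0,χ_b] is such that Λ·R(s)² < 1 for all s ∈ (0,χ], then R'(s) = √(1 − 2m(s)/R(s) − Λ·R(s)²/3) > 0 for all s ∈ (0,χ]; in particular R is strictly increasing on [0,χ]. -/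
/-!
If `R'` vanished at some point of `(0, χ]`, the radial pressure there would be
`8πp = Λ - 1/R² < 0`. So the continuous function `R'` has no zero on `(0, χ]`, and since
`R'(0) = 1` the intermediate value theorem keeps it positive. The formula for `R'` is the
mass definition solved for `R'²`.
-/

open Real Set

theorem deriv_pos_of_deriv_ne_zero {f : ℝ → ℝ} {a b : ℝ} (hf : ContDiffOn ℝ 1 f (Icc a b))
    (ha : 0 < deriv f a) (hne : ∀ x ∈ Ioc a b, deriv f x ≠ 0) :
    ∀ x ∈ Icc a b, 0 < deriv f x := by
  intro x hx
  rcases hx.1.eq_or_lt with rfl | hax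
  · exact ha
  have hab : a < b := hax.trans_le hx.2
  have hne' : ∀ y ∈ Icc a b, deriv f y ≠ 0 := fun y hy =>
    hy.1.eq_or_lt.elim (fun h => h ▸ ha.ne') fun h => hne y ⟨h, hy.2⟩
  set g := derivWithin f (Icc a b)
  have hg : ContinuousOn g (Icc a b) :=
    hf.continuousOn_derivWithin (uniqueDiffOn_Icc hab) le_rfl
  -- a nonzero `deriv` certifies differentiability, so `g` agrees with `deriv f` on `[a, b]`
  have hgf : ∀ y ∈ Icc a b, g y = deriv f y := fun y hy =>
    (differentiableAt_of_deriv_ne_zero (hne' y hy)).derivWithin (uniqueDiffOn_Icc hab y hy)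
  by_contra! hx0
  have hzero : (0 : ℝ) ∈ Icc (g x) (g a) := by
    rw [hgf x hx, hgf a (left_mem_Icc.2 hab.le)]
    exact ⟨hx0, ha.le⟩
  obtain ⟨t, ht, hgt⟩ :=
    isPreconnected_Icc.intermediate_value hx (left_mem_Icc.2 hab.le) hg hzero
  exact hne' t ht (by rw [← hgf t ht, hgt])

theorem areaRadius_deriv_ne_zero_of_pressure_nonneg {Λ R R' ν' p : ℝ} (hR : 0 < R)
    (hΛR : Λ * R ^ 2 < 1) (hp : 0 ≤ p)
    (hpdef : 8 * π * p = (R' ^ 2 - 1 + 2 * R * R' * ν') / R ^ 2 + Λ) :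
    R' ≠ 0 := by
  rintro rfl
  have hpR : 8 * π * p * R ^ 2 = Λ * R ^ 2 - 1 := by
    rw [hpdef]
    field_simp
    ring
  have : 0 ≤ 8 * π * p * R ^ 2 := by positivity
  linarith

theorem areaRadius_deriv_eq_sqrt_of_mass {Λ R R' m : ℝ} (hR : 0 < R) (hR' : 0 ≤ R')
    (hm : m = R / 2 * (1 - R' ^ 2) - Λ / 6 * R ^ 3) :
    R' = √(1 - 2 * m / R - Λ * R ^ 2 / 3) := by
  have hsq : 1 - 2 * m / R - Λ * R ^ 2 / 3 = R' ^ 2 := by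
    rw [hm]
    field_simp
    ring
  rw [hsq, sqrt_sq hR']

theorem radius_strictly_increasing_general
    (Λ χb : ℝ)
    (R ν p m : ℝ → ℝ)
    (hR1 : ContDiffOn ℝ 1 R (Icc 0 χb))
    (hRpos : ∀ χ ∈ Ioc 0 χb, 0 < R χ)
    (hR'0 : deriv R 0 = 1)
    (hpdef : ∀ χ ∈ Ioc 0 χb,
      8 * π * p χ =
        ((deriv R χ) ^ 2 - 1 + 2 * R χ * deriv R χ * deriv ν χ) / (R χ) ^ 2 + Λ)
    (hmdef : ∀ χ ∈ Ioc 0 χb,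
      m χ = R χ / 2 * (1 - (deriv R χ) ^ 2) - Λ / 6 * (R χ) ^ 3)
    (hppos : ∀ χ ∈ Ioc 0 χb, 0 ≤ p χ) :
    ∀ χ ∈ Ioc 0 χb, (∀ s ∈ Ioc 0 χ, Λ * (R s) ^ 2 < 1) →
      (∀ s ∈ Ioc 0 χ,
        deriv R s = Real.sqrt (1 - 2 * m s / R s - Λ * (R s) ^ 2 / 3) ∧
        0 < deriv R s) ∧
      StrictMonoOn R (Icc 0 χ) := by
  intro χ hχ hΛR
  have hsub : Icc 0 χ ⊆ Icc 0 χb := Icc_subset_Icc le_rfl hχ.2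
  have hIoc : ∀ s ∈ Ioc 0 χ, s ∈ Ioc 0 χb := fun s hs => ⟨hs.1, hs.2.trans hχ.2⟩
  have hpos : ∀ s ∈ Icc 0 χ, 0 < deriv R s :=
    deriv_pos_of_deriv_ne_zero (hR1.mono hsub) (hR'0 ▸ one_pos) fun s hs =>
      areaRadius_deriv_ne_zero_of_pressure_nonneg (hRpos s (hIoc s hs)) (hΛR s hs)
        (hppos s (hIoc s hs)) (hpdef s (hIoc s hs))
  refine ⟨fun s hs => ⟨?_, hpos s (Ioc_subset_Icc_self hs)⟩, ?_⟩
  · exact areaRadius_deriv_eq_sqrt_of_mass (hRpos s (hIoc s hs))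
      (hpos s (Ioc_subset_Icc_self hs)).le (hmdef s (hIoc s hs))
  · refine strictMonoOn_of_deriv_pos (convex_Icc 0 χ) (hR1.continuousOn.mono hsub) fun x hx => ?_
    rw [interior_Icc] at hx
    exact hpos x (Ioo_subset_Icc_self hx)

/-- If `Λ R(s)² < 1` on `(0,χ]` then `R'(s) = √(1 − 2m/R − ΛR²/3) > 0` there,
and in particular the area radius `R` is strictly increasing on `[0,χ]`. -/
theorem radius_strictly_increasing
    (Λ χb : ℝ) (hΛ : 0 ≤ Λ) (hχb : 0 < χb)
    (R ν ρ p pt m : ℝ → ℝ)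
    (hR1 : ContDiffOn ℝ 1 R (Icc 0 χb))
    (hR2 : ContDiffOn ℝ 2 R (Ioc 0 χb))
    (hν : ContDiffOn ℝ 2 ν (Ioc 0 χb))
    (hRpos : ∀ χ ∈ Ioc 0 χb, 0 < R χ)
    (hR0 : R 0 = 0) (hR'0 : deriv R 0 = 1)
    (hρdef : ∀ χ ∈ Ioc 0 χb,
      8 * π * ρ χ =
        (1 - (deriv R χ) ^ 2 - 2 * R χ * deriv (deriv R) χ) / (R χ) ^ 2 - Λ)
    (hpdef : ∀ χ ∈ Ioc 0 χb,
      8 * π * p χ =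
        ((deriv R χ) ^ 2 - 1 + 2 * R χ * deriv R χ * deriv ν χ) / (R χ) ^ 2 + Λ)
    (hptdef : ∀ χ ∈ Ioc 0 χb,
      8 * π * pt χ =
        (deriv ν χ * deriv R χ + R χ * ((deriv ν χ) ^ 2 + deriv (deriv ν) χ)
          + deriv (deriv R) χ) / R χ + Λ)
    (hmdef : ∀ χ ∈ Ioc 0 χb,
      m χ = R χ / 2 * (1 - (deriv R χ) ^ 2) - Λ / 6 * (R χ) ^ 3)
    (hρpos : ∀ χ ∈ Ioc 0 χb, 0 ≤ ρ χ)
    (hppos : ∀ χ ∈ Ioc 0 χb, 0 ≤ p χ)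
    (hec : ∀ χ ∈ Ioc 0 χb, p χ + 2 * pt χ ≤ ρ χ) :
    ∀ χ ∈ Ioc 0 χb, (∀ s ∈ Ioc 0 χ, Λ * (R s) ^ 2 < 1) →
      (∀ s ∈ Ioc 0 χ,
        deriv R s = Real.sqrt (1 - 2 * m s / R s - Λ * (R s) ^ 2 / 3) ∧
        0 < deriv R s) ∧
      StrictMonoOn R (Icc 0 χ) :=
  radius_strictly_increasing_general Λ χb R ν p m hR1 hRpos hR'0 hpdef hmdef hppos
end

section
/- Let X and z be real numbers with 0 ≤ z < 1 and X ≤ 2/9 − z/3 + (2/9)·√(1 + 3z). Then 2X + z/3 < 1. -/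
open Real

theorem Real.sqrt_lt_half_div_add {a c : ℝ} (ha : 0 ≤ a) (hc : 0 < c) (hac : a ≠ c ^ 2) :
    √a < (a / c + c) / 2 := by
  have hmean : 0 < (a / c + c) / 2 := by positivity
  rw [Real.sqrt_lt' hmean, div_add' _ _ _ hc.ne', div_div, div_pow, lt_div_iff₀ (by positivity)]
  nlinarith [sq_pos_of_ne_zero (sub_ne_zero.mpr hac)]

/-- Algebraic content of Corollary 1: if `0 ≤ z < 1` and
`X ≤ 2/9 − z/3 + (2/9)√(1 + 3z)`, then `2X + z/3 < 1`. -/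
theorem compactness_bound_implies_positivity
    (X z : ℝ) (hz0 : 0 ≤ z) (hz1 : z < 1)
    (hX : X ≤ 2 / 9 - z / 3 + 2 / 9 * Real.sqrt (1 + 3 * z)) :
    2 * X + z / 3 < 1 := by
  -- `2X + z/3 < 1` reduces to `√(1 + 3z) < (5 + 3z)/4`, AM–GM with `c = 2`, strict since `z ≠ 1`.
  have hsqrt : √(1 + 3 * z) < ((1 + 3 * z) / 2 + 2) / 2 :=
    Real.sqrt_lt_half_div_add (by linarith) two_pos (by linarith)
  linarith
end

section
/- Let x, y, z be real numbers with 0 ≤ x < 1, y ≥ 0, 0 ≤ z ≤ 1, and suppose u(x,y,z) := 3x² + (y−z)² − 2(x−y) + 2z(3−4x) ≤ 0. Then w(x,y,z) := (3(1−x) + 1 + y − z)²/(1−x) satisfies w(x,y,z) ≤ 16 − 9x² − 24z(1−x) − 8z ≤ 16, and w(x,y,z) = 16 holds if and only if x = y = z = 0. -/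
/-!
Clearing the denominator `1 - x`, the first inequality is the polynomial identity
`M·(1 - x) - (3(1 - x) + 1 + y - z)² = (4 - 3x)·(-u) + 3(1 - x)(y - z)²`, where `M` is the middle
bound; both terms on the right are nonnegative on the constraint region. The bound `M ≤ 16`
is tight only at `x = z = 0`, and there `u ≤ 0` reads `y² + 2y ≤ 0`, which together with
`(4 + y)² = 16` forces `y = 0`.
-/

namespace EnergyConditionBound

def u (x y z : ℝ) : ℝ := 3 * x ^ 2 + (y - z) ^ 2 - 2 * (x - y) + 2 * z * (3 - 4 * x)

noncomputable def w (x y z : ℝ) : ℝ := (3 * (1 - x) + 1 + y - z) ^ 2 / (1 - x)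

def majorant (x z : ℝ) : ℝ := 16 - 9 * x ^ 2 - 24 * z * (1 - x) - 8 * z

theorem majorant_mul_sub_sq_eq (x y z : ℝ) :
    majorant x z * (1 - x) - (3 * (1 - x) + 1 + y - z) ^ 2 =
      (4 - 3 * x) * -u x y z + 3 * (1 - x) * (y - z) ^ 2 := by
  unfold majorant u
  ring

theorem w_le_majorant {x y z : ℝ} (hx : x < 1) (hu : u x y z ≤ 0) : w x y z ≤ majorant x z := by
  have hx' : 0 < 1 - x := sub_pos.2 hx
  rw [w, div_le_iff₀ hx']
  have h₁ : 0 ≤ (4 - 3 * x) * -u x y z := mul_nonneg (by linarith) (neg_nonneg.2 hu)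
  have h₂ : 0 ≤ 3 * (1 - x) * (y - z) ^ 2 := by positivity
  linarith [majorant_mul_sub_sq_eq x y z]

theorem majorant_le_sixteen {x z : ℝ} (hx : x ≤ 1) (hz : 0 ≤ z) : majorant x z ≤ 16 := by
  unfold majorant
  nlinarith [sq_nonneg x, mul_nonneg hz (sub_nonneg.2 hx)]

theorem eq_zero_of_majorant_eq_sixteen {x z : ℝ} (hx : x ≤ 1) (hz : 0 ≤ z)
    (h : majorant x z = 16) : x = 0 ∧ z = 0 := by
  unfold majorant at h
  have hxz : 0 ≤ z * (1 - x) := mul_nonneg hz (sub_nonneg.2 hx)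
  have hz0 : z = 0 := by nlinarith [sq_nonneg x]
  subst hz0
  exact ⟨by nlinarith [sq_nonneg x], rfl⟩

theorem eq_zero_of_u_nonpos_of_w_eq_sixteen {y : ℝ} (hu : u 0 y 0 ≤ 0) (hw : w 0 y 0 = 16) :
    y = 0 := by
  norm_num [u, w] at hu hw
  nlinarith

end EnergyConditionBound

open EnergyConditionBound in
theorem optimization_w_le_16_general
    (x y z : ℝ) (hx1 : x < 1)
    (hz0 : 0 ≤ z)
    (hu : 3 * x ^ 2 + (y - z) ^ 2 - 2 * (x - y) + 2 * z * (3 - 4 * x) ≤ 0) :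
    (3 * (1 - x) + 1 + y - z) ^ 2 / (1 - x) ≤ 16 - 9 * x ^ 2 - 24 * z * (1 - x) - 8 * z ∧
    16 - 9 * x ^ 2 - 24 * z * (1 - x) - 8 * z ≤ 16 ∧
    ((3 * (1 - x) + 1 + y - z) ^ 2 / (1 - x) = 16 ↔ x = 0 ∧ y = 0 ∧ z = 0) := by
  have hw : w x y z ≤ majorant x z := w_le_majorant hx1 hu
  have hM : majorant x z ≤ 16 := majorant_le_sixteen hx1.le hz0
  refine ⟨hw, hM, fun h => ?_, ?_⟩
  · obtain ⟨rfl, rfl⟩ := eq_zero_of_majorant_eq_sixteen hx1.le hz0 (le_antisymm hM (h.ge.trans hw))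
    exact ⟨rfl, eq_zero_of_u_nonpos_of_w_eq_sixteen hu h, rfl⟩
  · rintro ⟨rfl, rfl, rfl⟩
    norm_num

/-- Solution of the optimization problem in the proof of Theorem 1: on the
constraint region `{0 ≤ x < 1, y ≥ 0, 0 ≤ z ≤ 1, u(x,y,z) ≤ 0}` the comparison
function `w(x,y,z) = (3(1−x)+1+y−z)²/(1−x)` satisfies
`w ≤ 16 − 9x² − 24z(1−x) − 8z ≤ 16`, with `w = 16` iff `x = y = z = 0`. -/
theorem optimization_w_le_16
    (x y z : ℝ) (hx0 : 0 ≤ x) (hx1 : x < 1) (hy : 0 ≤ y)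
    (hz0 : 0 ≤ z) (hz1 : z ≤ 1)
    (hu : 3 * x ^ 2 + (y - z) ^ 2 - 2 * (x - y) + 2 * z * (3 - 4 * x) ≤ 0) :
    (3 * (1 - x) + 1 + y - z) ^ 2 / (1 - x) ≤ 16 - 9 * x ^ 2 - 24 * z * (1 - x) - 8 * z ∧
    16 - 9 * x ^ 2 - 24 * z * (1 - x) - 8 * z ≤ 16 ∧
    ((3 * (1 - x) + 1 + y - z) ^ 2 / (1 - x) = 16 ↔ x = 0 ∧ y = 0 ∧ z = 0) :=
  optimization_w_le_16_general x y z hx1 hz0 hu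
end

section
/- Let I ⊆ ℝ be an interval and let x, y, z : I → ℝ be differentiable with 0 ≤ x(t) < 1, y(t) ≥ 0, 0 ≤ z(t) ≤ 1 and z'(t) = z(t) for all t ∈ I. Suppose the energy-condition inequality y + x'·(x + y − z)/(1 − x) + 2y' + (x + y − z)²/(2(1 − x)) ≤ 2x' + x − z holds pointwise on I. Then w(t) := (4 − 3x + y − z)²/(1 − x) satisfies w'(t) ≤ −[(4 − 3x + y − z)/(2(1 − x)²)]·u(x,y,z) pointwise, where u(x,y,z) = 3x² + (y−z)² − 2(x−y) + 2z(3−4x). In particular w'(t) ≤ 0 at every t where u(x(t),y(t),z(t)) > 0. -/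
/-!
Write `N = 4 - 3x + y - z` and `D = 1 - x`, so that `w = N²/D` and
`w' = N (2 N' D + N x') / D²`. Using `z' = z`, the quantity `2 N' D + N x' + u/2` is exactly
`D` times the energy-condition defect, hence nonpositive; since `N > 0`, this gives
`w' ≤ -N u / (2 D²)`.
-/

open Set

def constraintFun (x y z : ℝ) : ℝ :=
  3 * x ^ 2 + (y - z) ^ 2 - 2 * (x - y) + 2 * z * (3 - 4 * x)

noncomputable def comparisonFun (x y z : ℝ) : ℝ :=
  (4 - 3 * x + y - z) ^ 2 / (1 - x)

theorem HasDerivAt.sq_div {f g : ℝ → ℝ} {f' g' t : ℝ} (hf : HasDerivAt f f' t)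
    (hg : HasDerivAt g g' t) (hgt : g t ≠ 0) :
    HasDerivAt (fun s => f s ^ 2 / g s) (f t * (2 * f' * g t - f t * g') / g t ^ 2) t := by
  refine ((hf.fun_pow 2).div hg hgt).congr_deriv ?_
  ring

theorem hasDerivAt_comparisonFun {x y z : ℝ → ℝ} {x' y' z' t : ℝ} (hx : HasDerivAt x x' t)
    (hy : HasDerivAt y y' t) (hz : HasDerivAt z z' t) (hxt : x t ≠ 1) :
    HasDerivAt (fun s => comparisonFun (x s) (y s) (z s))
      ((4 - 3 * x t + y t - z t) *
          (2 * (-3 * x' + y' - z') * (1 - x t) + (4 - 3 * x t + y t - z t) * x') /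
        (1 - x t) ^ 2) t := by
  refine (((((hx.const_mul 3).const_sub 4).add hy).sub hz).sq_div (hx.const_sub 1)
    (sub_ne_zero.mpr (Ne.symm hxt))).congr_deriv ?_
  simp only [Pi.add_apply, Pi.sub_apply]
  ring

theorem one_sub_mul_energy_defect {x y z x' y' : ℝ} (hx : x ≠ 1) :
    (1 - x) * (y + x' * (x + y - z) / (1 - x) + 2 * y' + (x + y - z) ^ 2 / (2 * (1 - x))
        - (2 * x' + x - z)) =
      2 * (-3 * x' + y' - z) * (1 - x) + (4 - 3 * x + y - z) * x' + constraintFun x y z / 2 := by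
  have hx' : 1 - x ≠ 0 := sub_ne_zero.mpr (Ne.symm hx)
  unfold constraintFun
  field_simp
  ring

theorem comparison_deriv_le_of_energy_condition {x y z x' y' : ℝ} (hx : x < 1) (hy : 0 ≤ y)
    (hz : z ≤ 1)
    (hec : y + x' * (x + y - z) / (1 - x) + 2 * y' + (x + y - z) ^ 2 / (2 * (1 - x)) ≤
      2 * x' + x - z) :
    (4 - 3 * x + y - z) * (2 * (-3 * x' + y' - z) * (1 - x) + (4 - 3 * x + y - z) * x') /
        (1 - x) ^ 2 ≤
      -((4 - 3 * x + y - z) / (2 * (1 - x) ^ 2)) * constraintFun x y z := by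
  have hD : 0 < 1 - x := sub_pos.mpr hx
  have hN : 0 ≤ 4 - 3 * x + y - z := by linarith
  have hdefect : 2 * (-3 * x' + y' - z) * (1 - x) + (4 - 3 * x + y - z) * x' ≤
      -(constraintFun x y z / 2) := by
    have hmul := one_sub_mul_energy_defect (y := y) (z := z) (x' := x') (y' := y') hx.ne
    linarith [mul_nonpos_of_nonneg_of_nonpos hD.le (sub_nonpos.mpr hec)]
  calc (4 - 3 * x + y - z) * (2 * (-3 * x' + y' - z) * (1 - x) + (4 - 3 * x + y - z) * x') /
        (1 - x) ^ 2
      ≤ (4 - 3 * x + y - z) * -(constraintFun x y z / 2) / (1 - x) ^ 2 := by gcongr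
    _ = -((4 - 3 * x + y - z) / (2 * (1 - x) ^ 2)) * constraintFun x y z := by
      field_simp

theorem comparison_function_decreasing_general
    (I : Set ℝ)
    (x y z : ℝ → ℝ)
    (hx : ∀ t ∈ I, DifferentiableAt ℝ x t)
    (hy : ∀ t ∈ I, DifferentiableAt ℝ y t)
    (hz : ∀ t ∈ I, DifferentiableAt ℝ z t)
    (hx01 : ∀ t ∈ I, 0 ≤ x t ∧ x t < 1)
    (hy0 : ∀ t ∈ I, 0 ≤ y t)
    (hz01 : ∀ t ∈ I, 0 ≤ z t ∧ z t ≤ 1)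
    (hzode : ∀ t ∈ I, deriv z t = z t)
    (hec : ∀ t ∈ I,
      y t + deriv x t * (x t + y t - z t) / (1 - x t) + 2 * deriv y t
          + (x t + y t - z t) ^ 2 / (2 * (1 - x t)) ≤
        2 * deriv x t + x t - z t) :
    ∀ t ∈ I,
      (deriv (fun s => (4 - 3 * x s + y s - z s) ^ 2 / (1 - x s)) t ≤
        -((4 - 3 * x t + y t - z t) / (2 * (1 - x t) ^ 2)) *
          (3 * (x t) ^ 2 + (y t - z t) ^ 2 - 2 * (x t - y t)
            + 2 * z t * (3 - 4 * x t))) ∧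
      (0 < 3 * (x t) ^ 2 + (y t - z t) ^ 2 - 2 * (x t - y t)
            + 2 * z t * (3 - 4 * x t) →
        deriv (fun s => (4 - 3 * x s + y s - z s) ^ 2 / (1 - x s)) t ≤ 0) := by
  intro t ht
  have hxt := (hx01 t ht).2
  have hdz := (hz t ht).hasDerivAt
  rw [hzode t ht] at hdz
  have hw := hasDerivAt_comparisonFun (hx t ht).hasDerivAt (hy t ht).hasDerivAt hdz hxt.ne
  have hbound : deriv (fun s => comparisonFun (x s) (y s) (z s)) t ≤
      -((4 - 3 * x t + y t - z t) / (2 * (1 - x t) ^ 2)) * constraintFun (x t) (y t) (z t) :=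
    hw.deriv ▸ comparison_deriv_le_of_energy_condition hxt (hy0 t ht) (hz01 t ht).2 (hec t ht)
  refine ⟨hbound, fun hu => hbound.trans ?_⟩
  have hN : 0 ≤ 4 - 3 * x t + y t - z t := by linarith [hy0 t ht, (hz01 t ht).2]
  rw [neg_mul, neg_nonpos]
  exact mul_nonneg (by positivity) hu.le

/-- The energy-condition differential inequality implies the decay estimate for
the comparison function `w = (4 − 3x + y − z)²/(1 − x)`:
`w' ≤ −[(4 − 3x + y − z)/(2(1 − x)²)]·u(x,y,z)`, where
`u(x,y,z) = 3x² + (y−z)² − 2(x−y) + 2z(3−4x)`; in particular `w' ≤ 0`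
wherever `u > 0`. -/
theorem comparison_function_decreasing
    (I : Set ℝ) (hI : I.OrdConnected)
    (x y z : ℝ → ℝ)
    (hx : ∀ t ∈ I, DifferentiableAt ℝ x t)
    (hy : ∀ t ∈ I, DifferentiableAt ℝ y t)
    (hz : ∀ t ∈ I, DifferentiableAt ℝ z t)
    (hx01 : ∀ t ∈ I, 0 ≤ x t ∧ x t < 1)
    (hy0 : ∀ t ∈ I, 0 ≤ y t)
    (hz01 : ∀ t ∈ I, 0 ≤ z t ∧ z t ≤ 1)
    (hzode : ∀ t ∈ I, deriv z t = z t)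
    (hec : ∀ t ∈ I,
      y t + deriv x t * (x t + y t - z t) / (1 - x t) + 2 * deriv y t
          + (x t + y t - z t) ^ 2 / (2 * (1 - x t)) ≤
        2 * deriv x t + x t - z t) :
    ∀ t ∈ I,
      (deriv (fun s => (4 - 3 * x s + y s - z s) ^ 2 / (1 - x s)) t ≤
        -((4 - 3 * x t + y t - z t) / (2 * (1 - x t) ^ 2)) *
          (3 * (x t) ^ 2 + (y t - z t) ^ 2 - 2 * (x t - y t)
            + 2 * z t * (3 - 4 * x t))) ∧
      (0 < 3 * (x t) ^ 2 + (y t - z t) ^ 2 - 2 * (x t - y t)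
            + 2 * z t * (3 - 4 * x t) →
        deriv (fun s => (4 - 3 * x s + y s - z s) ^ 2 / (1 - x s)) t ≤ 0) :=
  comparison_function_decreasing_general I x y z hx hy hz hx01 hy0 hz01 hzode hec
end

section
/- Let Λ ∈ ℝ, let R, ν be twice continuously differentiable real functions on an interval I, and define ρ, p, p⊥ and m from R, ν, Λ by the field equations and mass definition. Then at every χ ∈ I with R(χ) > 0 and R'(χ) ≠ 0, the generalized Tolman–Oppenheimer–Volkov equation holds: p'(χ) = −(ρ + p)·(4πp + m/R³ − Λ/3)·R/R' − 2·(R'/R)·(p − p⊥), all quantities evaluated at χ. -/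
open Real Set

/-!
Only the field equation for `p` needs differentiating: it makes `8πp` a rational function of
`R, R', ν'`, so `p'` is a rational function of `R, R', R'', ν', ν''`. Substituting the field
equations for `ρ, p, p⊥` and the mass into the right-hand side of the TOV equation yields the
same rational function; this is the conservation law `∇_μ T^{μν} = 0` implied by the
Bianchi identity.
-/

section Calculus

variable {𝕜 : Type*} [NontriviallyNormedField 𝕜] {F : Type*} [NormedAddCommGroup F]
  [NormedSpace 𝕜 F] {f : 𝕜 → F} {s : Set 𝕜} {x : 𝕜}

theorem ContDiffOn.hasDerivAt_of_isOpen {n : WithTop ℕ∞} (hf : ContDiffOn 𝕜 n f s)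
    (hn : n ≠ 0) (hs : IsOpen s) (hx : x ∈ s) : HasDerivAt f (deriv f x) x :=
  ((hf.differentiableOn hn).differentiableAt (hs.mem_nhds hx)).hasDerivAt

theorem ContDiffOn.hasDerivAt_deriv_of_isOpen {n : WithTop ℕ∞} (hf : ContDiffOn 𝕜 n f s)
    (hn : 2 ≤ n) (hs : IsOpen s) (hx : x ∈ s) : HasDerivAt (deriv f) (deriv (deriv f) x) x :=
  (((hf.deriv_of_isOpen hs (m := 1) hn).differentiableOn one_ne_zero).differentiableAt
    (hs.mem_nhds hx)).hasDerivAt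

end Calculus

/-- The right-hand side of the field equation for `8πp`, as a function of `R, R', ν'`. -/
theorem hasDerivAt_radialPressure {a b c : ℝ → ℝ} {a' b' c' x : ℝ} (Λ : ℝ)
    (ha : HasDerivAt a a' x) (hb : HasDerivAt b b' x) (hc : HasDerivAt c c' x)
    (hax : a x ≠ 0) :
    HasDerivAt (fun y => ((b y) ^ 2 - 1 + 2 * a y * b y * c y) / (a y) ^ 2 + Λ)
      ((2 * b x * b' + 2 * (a' * b x + a x * b') * c x + 2 * a x * b x * c') / (a x) ^ 2
        - 2 * a' * ((b x) ^ 2 - 1 + 2 * a x * b x * c x) / (a x) ^ 3) x := by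
  have hnum : HasDerivAt (fun y => (b y) ^ 2 - 1 + 2 * a y * b y * c y)
      (2 * b x * b' + 2 * (a' * b x + a x * b') * c x + 2 * a x * b x * c') x := by
    refine (((hb.fun_pow 2).sub_const 1).add
      (((ha.const_mul 2).fun_mul hb).fun_mul hc)).congr_deriv ?_
    push_cast
    ring
  refine ((hnum.fun_div (ha.fun_pow 2) (pow_ne_zero 2 hax)).add_const Λ).congr_deriv ?_
  field_simp
  ring

theorem tov_identity {Λ r r₁ r₂ n₁ n₂ ρ p pt m p' : ℝ} (hr : r ≠ 0) (hr₁ : r₁ ≠ 0)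
    (hρ : 8 * π * ρ = (1 - r₁ ^ 2 - 2 * r * r₂) / r ^ 2 - Λ)
    (hp : 8 * π * p = (r₁ ^ 2 - 1 + 2 * r * r₁ * n₁) / r ^ 2 + Λ)
    (hpt : 8 * π * pt = (n₁ * r₁ + r * (n₁ ^ 2 + n₂) + r₂) / r + Λ)
    (hm : m = r / 2 * (1 - r₁ ^ 2) - Λ / 6 * r ^ 3)
    (hp' : 8 * π * p' = (2 * r₁ * r₂ + 2 * (r₁ * r₁ + r * r₂) * n₁ + 2 * r * r₁ * n₂) / r ^ 2
        - 2 * r₁ * (r₁ ^ 2 - 1 + 2 * r * r₁ * n₁) / r ^ 3) :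
    p' = -(ρ + p) * (4 * π * p + m / r ^ 3 - Λ / 3) * (r / r₁) - 2 * (r₁ / r) * (p - pt) := by
  have hπ : 8 * π ≠ 0 := by positivity
  calc p' = (8 * π * p') / (8 * π) := (mul_div_cancel_left₀ p' hπ).symm
    _ = (-(8 * π * ρ + 8 * π * p) * (8 * π * p / 2 + m / r ^ 3 - Λ / 3) * (r / r₁)
          - 2 * (r₁ / r) * (8 * π * p - 8 * π * pt)) / (8 * π) := by
        rw [hp', hρ, hp, hpt, hm]
        field_simp
        ring
    _ = _ := by
        field_simp
        ring

theorem generalized_TOV_general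
    (Λ : ℝ) (I : Set ℝ) (hIopen : IsOpen I)
    (R ν ρ p pt m : ℝ → ℝ)
    (hR : ContDiffOn ℝ 2 R I) (hν : ContDiffOn ℝ 2 ν I)
    (hρdef : ∀ χ ∈ I,
      8 * π * ρ χ =
        (1 - (deriv R χ) ^ 2 - 2 * R χ * deriv (deriv R) χ) / (R χ) ^ 2 - Λ)
    (hpdef : ∀ χ ∈ I,
      8 * π * p χ =
        ((deriv R χ) ^ 2 - 1 + 2 * R χ * deriv R χ * deriv ν χ) / (R χ) ^ 2 + Λ)
    (hptdef : ∀ χ ∈ I,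
      8 * π * pt χ =
        (deriv ν χ * deriv R χ + R χ * ((deriv ν χ) ^ 2 + deriv (deriv ν) χ)
          + deriv (deriv R) χ) / R χ + Λ)
    (hmdef : ∀ χ ∈ I,
      m χ = R χ / 2 * (1 - (deriv R χ) ^ 2) - Λ / 6 * (R χ) ^ 3) :
    ∀ χ ∈ I, 0 < R χ → deriv R χ ≠ 0 →
      deriv p χ =
        -(ρ χ + p χ) * (4 * π * p χ + m χ / (R χ) ^ 3 - Λ / 3) * (R χ / deriv R χ)
          - 2 * (deriv R χ / R χ) * (p χ - pt χ) := by
  intro χ hχ hRpos hR₁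
  have hπ : 8 * π ≠ 0 := by positivity
  have hp' := (hasDerivAt_radialPressure Λ (hR.hasDerivAt_of_isOpen two_ne_zero hIopen hχ)
    (hR.hasDerivAt_deriv_of_isOpen le_rfl hIopen hχ)
    (hν.hasDerivAt_deriv_of_isOpen le_rfl hIopen hχ) hRpos.ne').div_const (8 * π)
  have hpI : p =ᶠ[nhds χ] fun y =>
      ((deriv R y ^ 2 - 1 + 2 * R y * deriv R y * deriv ν y) / R y ^ 2 + Λ) / (8 * π) := by
    filter_upwards [hIopen.mem_nhds hχ] with y hy
    rw [eq_div_iff hπ, mul_comm]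
    exact hpdef y hy
  rw [(hp'.congr_of_eventuallyEq hpI).deriv]
  exact tov_identity hRpos.ne' hR₁ (hρdef χ hχ) (hpdef χ hχ) (hptdef χ hχ) (hmdef χ hχ)
    (mul_div_cancel₀ _ hπ)

/-- The generalized Tolman–Oppenheimer–Volkov equation: for `R, ν` twice
continuously differentiable on an open interval `I`, with `ρ, p, p⊥, m` defined
from `R, ν, Λ` by the field equations and the mass definition, at every point
of `I` with `R > 0` and `R' ≠ 0` one has
`p' = −(ρ + p)(4πp + m/R³ − Λ/3)·R/R' − 2(R'/R)(p − p⊥)`. -/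
theorem generalized_TOV
    (Λ : ℝ) (I : Set ℝ) (hIopen : IsOpen I) (hIord : I.OrdConnected)
    (R ν ρ p pt m : ℝ → ℝ)
    (hR : ContDiffOn ℝ 2 R I) (hν : ContDiffOn ℝ 2 ν I)
    (hρdef : ∀ χ ∈ I,
      8 * π * ρ χ =
        (1 - (deriv R χ) ^ 2 - 2 * R χ * deriv (deriv R) χ) / (R χ) ^ 2 - Λ)
    (hpdef : ∀ χ ∈ I,
      8 * π * p χ =
        ((deriv R χ) ^ 2 - 1 + 2 * R χ * deriv R χ * deriv ν χ) / (R χ) ^ 2 + Λ)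
    (hptdef : ∀ χ ∈ I,
      8 * π * pt χ =
        (deriv ν χ * deriv R χ + R χ * ((deriv ν χ) ^ 2 + deriv (deriv ν) χ)
          + deriv (deriv R) χ) / R χ + Λ)
    (hmdef : ∀ χ ∈ I,
      m χ = R χ / 2 * (1 - (deriv R χ) ^ 2) - Λ / 6 * (R χ) ^ 3) :
    ∀ χ ∈ I, 0 < R χ → deriv R χ ≠ 0 →
      deriv p χ =
        -(ρ χ + p χ) * (4 * π * p χ + m χ / (R χ) ^ 3 - Λ / 3) * (R χ / deriv R χ)
          - 2 * (deriv R χ / R χ) * (p χ - pt χ) :=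
  generalized_TOV_general Λ I hIopen R ν ρ p pt m hR hν hρdef hpdef hptdef hmdef
end

section
/- Let Λ ∈ ℝ, let R, ν be twice continuously differentiable real functions on an interval I, and define ρ, p, p⊥ and m from R, ν, Λ by the field equations and mass definition. Define Γ(χ) = (4π p R³ + m − (Λ/3)R³)·e^ν / R'. Then at every χ ∈ I with R(χ) > 0 and R'(χ) ≠ 0, Γ'(χ) = (4π(ρ + p + 2p⊥)R² − ΛR²)·e^ν, all quantities evaluated at χ. -/
open Real Set

/-!
Near a point where `R ≠ 0` and `R' ≠ 0`, the definitions of `p` and `m` collapse the numerator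
of `Γ` to `R²R'ν'`, so `Γ = R²ν'e^ν` on a neighbourhood. Differentiating gives
`(2RR'ν' + R²(ν'² + ν''))e^ν`, and the field equations show that this bracket is exactly
`4π(ρ + p + 2p⊥)R² − ΛR²`.
-/

lemma gamma_numerator_eq {Λ R R' ν' p m : ℝ} (hR : R ≠ 0)
    (hp : 8 * π * p = (R' ^ 2 - 1 + 2 * R * R' * ν') / R ^ 2 + Λ)
    (hm : m = R / 2 * (1 - R' ^ 2) - Λ / 6 * R ^ 3) :
    4 * π * p * R ^ 3 + m - Λ / 3 * R ^ 3 = R ^ 2 * R' * ν' := by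
  have hp' : 8 * π * p * R ^ 2 = R' ^ 2 - 1 + 2 * R * R' * ν' + Λ * R ^ 2 := by
    rw [hp]; field_simp
  linear_combination (R / 2) * hp' + hm

lemma matter_combination_eq {Λ R R' R'' ν' ν'' ρ p pt : ℝ} (hR : R ≠ 0)
    (hρ : 8 * π * ρ = (1 - R' ^ 2 - 2 * R * R'') / R ^ 2 - Λ)
    (hp : 8 * π * p = (R' ^ 2 - 1 + 2 * R * R' * ν') / R ^ 2 + Λ)
    (hpt : 8 * π * pt = (ν' * R' + R * (ν' ^ 2 + ν'') + R'') / R + Λ) :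
    4 * π * (ρ + p + 2 * pt) * R ^ 2 - Λ * R ^ 2 = 2 * R * R' * ν' + R ^ 2 * (ν' ^ 2 + ν'') := by
  have hρ' : 8 * π * ρ * R ^ 2 = 1 - R' ^ 2 - 2 * R * R'' - Λ * R ^ 2 := by
    rw [hρ]; field_simp
  have hp' : 8 * π * p * R ^ 2 = R' ^ 2 - 1 + 2 * R * R' * ν' + Λ * R ^ 2 := by
    rw [hp]; field_simp
  have hpt' : 8 * π * pt * R = ν' * R' + R * (ν' ^ 2 + ν'') + R'' + Λ * R := by
    rw [hpt]; field_simp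
  linear_combination hρ' / 2 + hp' / 2 + R * hpt'

lemma hasDerivAt_sq_mul_mul_exp {f g h : ℝ → ℝ} {f' g' h' x : ℝ}
    (hf : HasDerivAt f f' x) (hg : HasDerivAt g g' x) (hh : HasDerivAt h h' x) :
    HasDerivAt (fun y => f y ^ 2 * h y * exp (g y))
      ((2 * f x * f' * h x + f x ^ 2 * (h x * g' + h')) * exp (g x)) x :=
  (((hf.fun_pow 2).fun_mul hh).fun_mul hg.exp).congr_deriv (by ring)

theorem Gamma_derivative_general
    (Λ : ℝ) (I : Set ℝ) (hIopen : IsOpen I)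
    (R ν ρ p pt m : ℝ → ℝ)
    (hR : ContDiffOn ℝ 2 R I) (hν : ContDiffOn ℝ 2 ν I)
    (hρdef : ∀ χ ∈ I,
      8 * π * ρ χ =
        (1 - (deriv R χ) ^ 2 - 2 * R χ * deriv (deriv R) χ) / (R χ) ^ 2 - Λ)
    (hpdef : ∀ χ ∈ I,
      8 * π * p χ =
        ((deriv R χ) ^ 2 - 1 + 2 * R χ * deriv R χ * deriv ν χ) / (R χ) ^ 2 + Λ)
    (hptdef : ∀ χ ∈ I,
      8 * π * pt χ =
        (deriv ν χ * deriv R χ + R χ * ((deriv ν χ) ^ 2 + deriv (deriv ν) χ)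
          + deriv (deriv R) χ) / R χ + Λ)
    (hmdef : ∀ χ ∈ I,
      m χ = R χ / 2 * (1 - (deriv R χ) ^ 2) - Λ / 6 * (R χ) ^ 3) :
    ∀ χ ∈ I, 0 < R χ → deriv R χ ≠ 0 →
      deriv (fun χ =>
          (4 * π * p χ * (R χ) ^ 3 + m χ - Λ / 3 * (R χ) ^ 3) * Real.exp (ν χ)
            / deriv R χ) χ =
        (4 * π * (ρ χ + p χ + 2 * pt χ) * (R χ) ^ 2 - Λ * (R χ) ^ 2)
          * Real.exp (ν χ) := by
  intro χ₀ hχ₀ hRpos hR'ne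
  have hI : I ∈ nhds χ₀ := hIopen.mem_nhds hχ₀
  have hR' : ContDiffOn ℝ 1 (deriv R) I := hR.deriv_of_isOpen hIopen (by norm_num)
  have hν' : ContDiffOn ℝ 1 (deriv ν) I := hν.deriv_of_isOpen hIopen (by norm_num)
  have hRne : ∀ᶠ χ in nhds χ₀, R χ ≠ 0 :=
    (hR.continuousOn.continuousAt hI).eventually_ne hRpos.ne'
  have hR'ne : ∀ᶠ χ in nhds χ₀, deriv R χ ≠ 0 :=
    (hR'.continuousOn.continuousAt hI).eventually_ne hR'ne
  have hΓ : (fun χ => (4 * π * p χ * (R χ) ^ 3 + m χ - Λ / 3 * (R χ) ^ 3) * exp (ν χ)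
      / deriv R χ) =ᶠ[nhds χ₀] fun χ => R χ ^ 2 * deriv ν χ * exp (ν χ) := by
    filter_upwards [hI, hRne, hR'ne] with χ hχ hRχ hR'χ
    rw [gamma_numerator_eq hRχ (hpdef χ hχ) (hmdef χ hχ)]
    field_simp
  have hdiff : ∀ {f : ℝ → ℝ}, ContDiffOn ℝ 1 f I → HasDerivAt f (deriv f χ₀) χ₀ :=
    fun hf => ((hf.contDiffAt hI).differentiableAt one_ne_zero).hasDerivAt
  rw [hΓ.deriv_eq, (hasDerivAt_sq_mul_mul_exp (hdiff (hR.of_le (by norm_num)))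
    (hdiff (hν.of_le (by norm_num))) (hdiff hν')).deriv,
    matter_combination_eq hRpos.ne' (hρdef χ₀ hχ₀) (hpdef χ₀ hχ₀) (hptdef χ₀ hχ₀)]
  ring

/-- Derivative of the auxiliary function `Γ = (4πpR³ + m − (Λ/3)R³)·e^ν / R'`:
for `R, ν` twice continuously differentiable on an open interval `I`, with
`ρ, p, p⊥, m` defined from `R, ν, Λ` by the field equations and the mass
definition, at every point of `I` with `R > 0` and `R' ≠ 0` one has
`Γ' = (4π(ρ + p + 2p⊥)R² − ΛR²)·e^ν`. -/
theorem Gamma_derivative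
    (Λ : ℝ) (I : Set ℝ) (hIopen : IsOpen I) (hIord : I.OrdConnected)
    (R ν ρ p pt m : ℝ → ℝ)
    (hR : ContDiffOn ℝ 2 R I) (hν : ContDiffOn ℝ 2 ν I)
    (hρdef : ∀ χ ∈ I,
      8 * π * ρ χ =
        (1 - (deriv R χ) ^ 2 - 2 * R χ * deriv (deriv R) χ) / (R χ) ^ 2 - Λ)
    (hpdef : ∀ χ ∈ I,
      8 * π * p χ =
        ((deriv R χ) ^ 2 - 1 + 2 * R χ * deriv R χ * deriv ν χ) / (R χ) ^ 2 + Λ)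
    (hptdef : ∀ χ ∈ I,
      8 * π * pt χ =
        (deriv ν χ * deriv R χ + R χ * ((deriv ν χ) ^ 2 + deriv (deriv ν) χ)
          + deriv (deriv R) χ) / R χ + Λ)
    (hmdef : ∀ χ ∈ I,
      m χ = R χ / 2 * (1 - (deriv R χ) ^ 2) - Λ / 6 * (R χ) ^ 3) :
    ∀ χ ∈ I, 0 < R χ → deriv R χ ≠ 0 →
      deriv (fun χ =>
          (4 * π * p χ * (R χ) ^ 3 + m χ - Λ / 3 * (R χ) ^ 3) * Real.exp (ν χ)
            / deriv R χ) χ =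
        (4 * π * (ρ χ + p χ + 2 * pt χ) * (R χ) ^ 2 - Λ * (R χ) ^ 2)
          * Real.exp (ν χ) :=
  Gamma_derivative_general Λ I hIopen R ν ρ p pt m hR hν hρdef hpdef hptdef hmdef
end

section
/- Let Λ > 0, χ₁ > 0 and R₁ > 0 with 0 < Λ·R₁² < 1. Under the same hypotheses on the sequence (R_k, ν_k) of solutions approaching an infinitely thin shell (regular centre; ρ_k ≥ 0, p_k ≥ 0, p_k + 2(p⊥)_k ≤ ρ_k; matter supported in [χ₀^k, χ₁] with χ₀^k → χ₁; sup_k sup_χ R_k² p_k < ∞; ∫_{χ₀^k}^{χ₁}(ρ_k − 2(p⊥)_k)R_k² dχ → 0; R_k(χ₁) = R₁, R_k(χ₀^k) → R₁; e^{ν_k(χ₁)} = √(1 − 2M_k/R₁ − ΛR₁²/3) with M_k := m_k(χ₁) → M), the strict inequality M/R₁ < 2/9 − Λ·R₁²/3 + (2/9)·√(1 + 3Λ·R₁²) holds; that is, infinitely thin shells do not saturate the compactness bound when 0 < ΛR₁² < 1. -/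
open Real Set Filter Topology

/-!
In the vacuum core of each solution the mass function vanishes, so `R' = √(1 − ΛR²/3)` and
`ν' = −ΛR/(3R')` at the inner edge `a` of the shell. Across the shell `m ≥ 0` and `p ≥ 0` keep
`R' > 0` and bound `ν'` from below, while `ρ ≥ p + 2p⊥` and `R²p ≤ C` bound `(R²e^ν)''` from above.
Integrating `(R²e^ν)''` over the shell and using `p ≥ 0` at `χ₁` and `e^{ν(χ₁)} = R'(χ₁)` gives
`R₁(1 − ΛR₁² + 3R'(χ₁)²)/2 ≤ R'(χ₁) e^{O(χ₁ − a)} (R(a)(2 − ΛR(a)²)/√(1 − ΛR(a)²/3) + O(χ₁ − a))`.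
In the thin-shell limit this is a quadratic inequality for `3R'(χ₁)√(1 − ΛR₁²/3)`, which forces
`(1 − ΛR₁²)² ≤ 3(3 − ΛR₁²)R'(χ₁)²`; the resulting bound on `M/R₁` lies strictly below the
compactness bound because `Λ > 0`.
-/

theorem mul_sub_le_image_sub_of_le_hasDerivAt {f f' : ℝ → ℝ} {a b C : ℝ} (hab : a ≤ b)
    (hf : ContinuousOn f (Icc a b)) (hf' : ∀ x ∈ Ioo a b, HasDerivAt f (f' x) x)
    (hC : ∀ x ∈ Ioo a b, C ≤ f' x) : C * (b - a) ≤ f b - f a := by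
  refine (convex_Icc a b).mul_sub_le_image_sub_of_le_deriv hf ?_ ?_ a ⟨le_rfl, hab⟩ b
    ⟨hab, le_rfl⟩ hab
  · rw [interior_Icc]
    exact fun x hx => (hf' x hx).differentiableAt.differentiableWithinAt
  · rw [interior_Icc]
    exact fun x hx => (hf' x hx).deriv ▸ hC x hx

theorem image_sub_le_mul_sub_of_hasDerivAt_le {f f' : ℝ → ℝ} {a b C : ℝ} (hab : a ≤ b)
    (hf : ContinuousOn f (Icc a b)) (hf' : ∀ x ∈ Ioo a b, HasDerivAt f (f' x) x)
    (hC : ∀ x ∈ Ioo a b, f' x ≤ C) : f b - f a ≤ C * (b - a) := by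
  have := mul_sub_le_image_sub_of_le_hasDerivAt hab hf.neg (fun x hx => (hf' x hx).neg)
    fun x hx => neg_le_neg (hC x hx)
  simp only [Pi.neg_apply] at this
  linarith

theorem ContinuousOn.pos_of_forall_ne_zero {f : ℝ → ℝ} {a b : ℝ}
    (hf : ContinuousOn f (Icc a b)) (ha : 0 < f a)
    (h : ∀ c ∈ Ioc a b, (∀ x ∈ Ioo a c, 0 < f x) → f c ≠ 0) : ∀ x ∈ Icc a b, 0 < f x := by
  by_contra! hneg
  obtain ⟨x, hx, hfx⟩ := hneg
  have hbdd : BddBelow (Icc a b ∩ f ⁻¹' Iic 0) := ⟨a, fun y hy => hy.1.1⟩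
  have hc := (hf.preimage_isClosed_of_isClosed isClosed_Icc isClosed_Iic).csInf_mem
    ⟨x, hx, hfx⟩ hbdd
  set c := sInf (Icc a b ∩ f ⁻¹' Iic 0)
  have hac : a < c := hc.1.1.lt_of_ne fun hac => (hac ▸ hc.2 : f a ≤ 0).not_gt ha
  have hbefore : ∀ y ∈ Ioo a c, 0 < f y := fun y hy => by
    by_contra! hfy
    exact (csInf_le hbdd ⟨⟨hy.1.le, hy.2.le.trans hc.1.2⟩, hfy⟩).not_gt hy.2
  have hfc : 0 ≤ f c := ContinuousWithinAt.closure_le (by simp [closure_Ioo hac.ne, hac.le])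
    continuousWithinAt_const
    ((hf c hc.1).mono (Ioo_subset_Icc_self.trans (Icc_subset_Icc_right hc.1.2)))
    fun y hy => (hbefore y hy).le
  exact h c ⟨hac, hc.1.2⟩ hbefore (le_antisymm hc.2 hfc)

theorem ContDiffOn.hasDerivAt_derivWithin {f : ℝ → ℝ} {s : Set ℝ} {x : ℝ}
    (hf : ContDiffOn ℝ 1 f s) (hs : s ∈ 𝓝 x) : HasDerivAt f (derivWithin f s x) x :=
  (hf.differentiableOn one_ne_zero x (mem_of_mem_nhds hs)).hasDerivWithinAt.hasDerivAt hs

theorem ContDiffOn.hasDerivAt_derivWithin_deriv_deriv {f : ℝ → ℝ} {s t : Set ℝ} {x : ℝ}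
    (hf : ContDiffOn ℝ 2 f s) (hs : s ∈ 𝓝 x) (ht : t ∈ 𝓝 x) :
    HasDerivAt (derivWithin f t) (deriv (deriv f) x) x := by
  have hx : x ∈ interior s := mem_interior_iff_mem_nhds.2 hs
  have hd : DifferentiableAt ℝ (deriv f) x :=
    (((hf.mono interior_subset).deriv_of_isOpen isOpen_interior (m := 1) le_rfl).differentiableOn
      one_ne_zero x hx).differentiableAt (isOpen_interior.mem_nhds hx)
  exact hd.hasDerivAt.congr_of_eventuallyEq
    ((eventually_mem_nhds_iff.2 ht).mono fun y hy => derivWithin_of_mem_nhds hy)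

theorem derivWithin_eq_deriv_of_ne_zero {f : ℝ → ℝ} {s : Set ℝ} {x : ℝ}
    (hs : UniqueDiffWithinAt ℝ s x) (h : deriv f x ≠ 0) : derivWithin f s x = deriv f x :=
  (differentiableAt_of_deriv_ne_zero h).derivWithin hs

/-- `m` as a function of the area radius `r` and of `w = R'`. -/
noncomputable def quasilocalMass (Λ r w : ℝ) : ℝ := r / 2 * (1 - w ^ 2) - Λ / 6 * r ^ 3

theorem sq_eq_of_quasilocalMass {Λ r : ℝ} (w : ℝ) (hr : r ≠ 0) :
    w ^ 2 = 1 - 2 * quasilocalMass Λ r w / r - Λ * r ^ 2 / 3 := by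
  unfold quasilocalMass
  field_simp
  ring

theorem sq_le_of_quasilocalMass_nonneg {Λ r w : ℝ} (hr : 0 < r)
    (hm : 0 ≤ quasilocalMass Λ r w) : w ^ 2 ≤ 1 - Λ * r ^ 2 / 3 := by
  have := sq_eq_of_quasilocalMass (Λ := Λ) w hr.ne'
  have := div_nonneg (mul_nonneg zero_le_two hm) hr.le
  linarith

theorem sq_eq_of_quasilocalMass_eq_zero {Λ r w : ℝ} (hr : 0 < r)
    (hm : quasilocalMass Λ r w = 0) : w ^ 2 = 1 - Λ * r ^ 2 / 3 := by
  simpa [hm] using sq_eq_of_quasilocalMass (Λ := Λ) w hr.ne'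

theorem HasDerivAt.quasilocalMass {R W : ℝ → ℝ} {w' x : ℝ} (Λ : ℝ)
    (hR : HasDerivAt R (W x) x) (hW : HasDerivAt W w' x) :
    HasDerivAt (fun y => quasilocalMass Λ (R y) (W y))
      (W x / 2 * (1 - W x ^ 2 - 2 * R x * w' - Λ * R x ^ 2)) x := by
  have := ((hR.div_const 2).fun_mul ((hW.fun_pow 2).const_sub 1)).fun_sub
    ((hR.fun_pow 3).const_mul (Λ / 6))
  exact this.congr_deriv (by push_cast; ring)

/-- `W, W', N, N'` stand for `R', R'', ν', ν''`; the inner edge of the shell is `a`. -/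
structure ShellSolution (Λ χ₁ a C : ℝ) (R W W' ν N N' ρ p pt : ℝ → ℝ) : Prop where
  Λ_nonneg : 0 ≤ Λ
  a_pos : 0 < a
  a_lt : a < χ₁
  continuousOn_R : ContinuousOn R (Icc 0 χ₁)
  continuousOn_W : ContinuousOn W (Icc 0 χ₁)
  continuousOn_ν : ContinuousOn ν (Ioc 0 χ₁)
  continuousOn_N : ContinuousOn N (Ioc 0 χ₁)
  hasDerivAt_R : ∀ x ∈ Ioo 0 χ₁, HasDerivAt R (W x) x
  hasDerivAt_W : ∀ x ∈ Ioo 0 χ₁, HasDerivAt W (W' x) x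
  hasDerivAt_ν : ∀ x ∈ Ioo 0 χ₁, HasDerivAt ν (N x) x
  hasDerivAt_N : ∀ x ∈ Ioo 0 χ₁, HasDerivAt N (N' x) x
  R_zero : R 0 = 0
  W_zero : W 0 = 1
  R_pos : ∀ x ∈ Ioc 0 χ₁, 0 < R x
  density_eq : ∀ x ∈ Ioo 0 χ₁,
    8 * π * ρ x * R x ^ 2 = 1 - W x ^ 2 - 2 * R x * W' x - Λ * R x ^ 2
  pressure_eq : ∀ x ∈ Ioo 0 χ₁,
    8 * π * p x * R x ^ 2 = W x ^ 2 - 1 + 2 * R x * W x * N x + Λ * R x ^ 2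
  tangentialPressure_eq : ∀ x ∈ Ioo 0 χ₁,
    8 * π * pt x * R x = N x * W x + R x * (N x ^ 2 + N' x) + W' x + Λ * R x
  density_nonneg : ∀ x ∈ Ioo 0 χ₁, 0 ≤ ρ x
  pressure_nonneg : ∀ x ∈ Ioo 0 χ₁, 0 ≤ p x
  energy_condition : ∀ x ∈ Ioo 0 χ₁, p x + 2 * pt x ≤ ρ x
  vacuum : ∀ x ∈ Ioo 0 a, ρ x = 0 ∧ p x = 0
  pressure_le : ∀ x ∈ Ioo 0 χ₁, R x ^ 2 * p x ≤ C

noncomputable def lapseSlope (Λ r : ℝ) : ℝ := Λ * r / (3 * √(1 - Λ * r ^ 2))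

noncomputable def shellBound (Λ C r δ : ℝ) : ℝ :=
  exp (lapseSlope Λ (r + δ) * δ) *
    (r * (2 - Λ * r ^ 2) / √(1 - Λ * r ^ 2 / 3) + (8 * π * C + 2) * δ)

/-- `hWsq` is `m ≥ 0` and `hp` is `p ≥ 0`, in terms of `R`, `W = R'` and `N = ν'`. -/
theorem neg_lapseSlope_le {Λ r R W N : ℝ} (hΛ : 0 ≤ Λ) (hR : 0 < R) (hRr : R ≤ r)
    (hr : Λ * r ^ 2 < 1) (hW : 0 < W) (hWsq : W ^ 2 ≤ 1 - Λ * R ^ 2 / 3)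
    (hp : 0 ≤ W ^ 2 - 1 + 2 * R * W * N + Λ * R ^ 2) : -lapseSlope Λ r ≤ N := by
  have hs : 0 < √(1 - Λ * r ^ 2) := sqrt_pos.2 (by linarith)
  have hK : 0 ≤ lapseSlope Λ r := by unfold lapseSlope; have := hR.le.trans hRr; positivity
  have hΛR : Λ * R ^ 2 ≤ Λ * r ^ 2 := by gcongr
  rcases lt_or_ge W √(1 - Λ * r ^ 2) with hWs | hWs
  · have : W ^ 2 < 1 - Λ * r ^ 2 := by
      calc W ^ 2 < √(1 - Λ * r ^ 2) ^ 2 := by gcongr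
        _ = 1 - Λ * r ^ 2 := sq_sqrt (by linarith)
    have : 0 < R * W * N := by linarith
    have : 0 < N := pos_of_mul_pos_right this (mul_pos hR hW).le
    linarith
  · have h3 : -(Λ * r) ≤ 3 * W * N := by
      have : -(Λ * R) ≤ 3 * W * N := by nlinarith
      nlinarith
    have hKs : lapseSlope Λ r * (3 * √(1 - Λ * r ^ 2)) = Λ * r := by
      unfold lapseSlope; field_simp
    have : 0 ≤ 3 * W * (N + lapseSlope Λ r) := by nlinarith
    linarith [(mul_nonneg_iff_of_pos_left (by positivity : (0:ℝ) < 3 * W)).1 this]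

namespace ShellSolution

variable {Λ χ₁ a C : ℝ} {R W W' ν N N' ρ p pt : ℝ → ℝ}

theorem χ₁_pos (hs : ShellSolution Λ χ₁ a C R W W' ν N N' ρ p pt) : 0 < χ₁ :=
  hs.a_pos.trans hs.a_lt

theorem hasDerivAt_mass (hs : ShellSolution Λ χ₁ a C R W W' ν N N' ρ p pt) {x : ℝ}
    (hx : x ∈ Ioo 0 χ₁) :
    HasDerivAt (fun y => quasilocalMass Λ (R y) (W y)) (4 * π * ρ x * R x ^ 2 * W x) x :=
  ((hs.hasDerivAt_R x hx).quasilocalMass Λ (hs.hasDerivAt_W x hx)).congr_deriv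
    (by rw [← hs.density_eq x hx]; ring)

theorem continuousOn_mass (hs : ShellSolution Λ χ₁ a C R W W' ν N N' ρ p pt) :
    ContinuousOn (fun y => quasilocalMass Λ (R y) (W y)) (Icc 0 χ₁) := by
  have := hs.continuousOn_R
  have := hs.continuousOn_W
  unfold quasilocalMass
  fun_prop

theorem mass_eq_zero (hs : ShellSolution Λ χ₁ a C R W W' ν N N' ρ p pt) :
    ∀ x ∈ Icc 0 a, quasilocalMass Λ (R x) (W x) = 0 := by
  intro x hx
  have hcont := hs.continuousOn_mass.mono (Icc_subset_Icc_right (hx.2.trans hs.a_lt.le))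
  have hd : ∀ y ∈ Ioo 0 x, HasDerivAt (fun y => quasilocalMass Λ (R y) (W y)) 0 y := by
    intro y hy
    have := hs.hasDerivAt_mass ⟨hy.1, hy.2.trans_le (hx.2.trans hs.a_lt.le)⟩
    rwa [(hs.vacuum y ⟨hy.1, hy.2.trans_le hx.2⟩).1, mul_zero, zero_mul, zero_mul] at this
  have h₁ := mul_sub_le_image_sub_of_le_hasDerivAt hx.1 hcont hd fun _ _ => le_rfl
  have h₂ := image_sub_le_mul_sub_of_hasDerivAt_le hx.1 hcont hd fun _ _ => le_rfl
  simp only [hs.R_zero, quasilocalMass] at h₁ h₂ ⊢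
  linarith

theorem mass_nonneg (hs : ShellSolution Λ χ₁ a C R W W' ν N N' ρ p pt) {c : ℝ} (hc : c ≤ χ₁)
    (hW : ∀ x ∈ Ioo 0 c, 0 < W x) : ∀ x ∈ Icc 0 c, 0 ≤ quasilocalMass Λ (R x) (W x) := by
  intro x hx
  have h := mul_sub_le_image_sub_of_le_hasDerivAt hx.1
    (hs.continuousOn_mass.mono (Icc_subset_Icc_right (hx.2.trans hc)))
    (fun y hy => hs.hasDerivAt_mass ⟨hy.1, hy.2.trans_le (hx.2.trans hc)⟩) fun y hy => by
      have := hs.density_nonneg y ⟨hy.1, hy.2.trans_le (hx.2.trans hc)⟩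
      have := hW y ⟨hy.1, hy.2.trans_le hx.2⟩
      positivity
  simp only [hs.R_zero, quasilocalMass] at h ⊢
  linarith

theorem R_le (hs : ShellSolution Λ χ₁ a C R W W' ν N N' ρ p pt) {c : ℝ} (hc : c ≤ χ₁)
    (hW : ∀ x ∈ Ioo 0 c, 0 < W x) : ∀ x ∈ Icc a c, R x ≤ R a + (x - a) := by
  intro x hx
  have hsub : Icc a x ⊆ Icc 0 χ₁ := Icc_subset_Icc hs.a_pos.le (hx.2.trans hc)
  have h := image_sub_le_mul_sub_of_hasDerivAt_le (C := 1) hx.1 (hs.continuousOn_R.mono hsub)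
    (fun y hy => hs.hasDerivAt_R y ⟨hs.a_pos.trans hy.1, hy.2.trans_le (hx.2.trans hc)⟩)
    fun y hy => by
      have hy₀ : y ∈ Icc 0 c := ⟨(hs.a_pos.trans hy.1).le, hy.2.le.trans hx.2⟩
      have := sq_le_of_quasilocalMass_nonneg (hs.R_pos y ⟨hs.a_pos.trans hy.1, hy₀.2.trans hc⟩)
        (hs.mass_nonneg hc hW y hy₀)
      have := hs.Λ_nonneg
      nlinarith
  linarith

theorem W_pos (hs : ShellSolution Λ χ₁ a C R W W' ν N N' ρ p pt)
    (hsmall : Λ * (R a + (χ₁ - a)) ^ 2 < 1) (hW₁ : W χ₁ ≠ 0) : ∀ x ∈ Icc 0 χ₁, 0 < W x := by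
  refine hs.continuousOn_W.pos_of_forall_ne_zero (hs.W_zero ▸ one_pos) fun c hc hW hWc => ?_
  have hRc := hs.R_pos c hc
  rcases lt_or_ge c a with hca | hac
  · -- in vacuum `m = 0` forces `ΛR² = 3` where `R' = 0`, while `p = 0` forces `ΛR² = 1`
    have hm := sq_eq_of_quasilocalMass_eq_zero hRc (hs.mass_eq_zero c ⟨hc.1.le, hca.le⟩)
    have hp := hs.pressure_eq c ⟨hc.1, hca.trans hs.a_lt⟩
    rw [(hs.vacuum c ⟨hc.1, hca⟩).2, hWc] at hp
    rw [hWc] at hm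
    nlinarith
  rcases hc.2.lt_or_eq with hcχ | rfl
  · have hp := hs.pressure_eq c ⟨hc.1, hcχ⟩
    have hp₀ := hs.pressure_nonneg c ⟨hc.1, hcχ⟩
    have hRle := hs.R_le hc.2 hW c ⟨hac, le_rfl⟩
    rw [hWc] at hp
    have : Λ * R c ^ 2 < 1 :=
      lt_of_le_of_lt (by gcongr; exacts [hs.Λ_nonneg, by linarith]) hsmall
    nlinarith [pi_pos, mul_nonneg (mul_nonneg pi_pos.le hp₀) (sq_nonneg (R c))]
  · exact hW₁ hWc

theorem neg_lapseSlope_le_N (hs : ShellSolution Λ χ₁ a C R W W' ν N N' ρ p pt)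
    (hsmall : Λ * (R a + (χ₁ - a)) ^ 2 < 1) (hW : ∀ x ∈ Icc 0 χ₁, 0 < W x) :
    ∀ x ∈ Ioo a χ₁, -lapseSlope Λ (R a + (χ₁ - a)) ≤ N x := by
  intro x hx
  have hx₀ : x ∈ Ioo 0 χ₁ := ⟨hs.a_pos.trans hx.1, hx.2⟩
  have hRx := hs.R_pos x (Ioo_subset_Ioc_self hx₀)
  have hWpos : ∀ y ∈ Ioo 0 χ₁, 0 < W y := fun y hy => hW y (Ioo_subset_Icc_self hy)
  refine neg_lapseSlope_le hs.Λ_nonneg hRx ?_ hsmall (hWpos x hx₀)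
    (sq_le_of_quasilocalMass_nonneg hRx (hs.mass_nonneg le_rfl hWpos x (Ioo_subset_Icc_self hx₀)))
    ?_
  · linarith [hs.R_le le_rfl hWpos x ⟨hx.1.le, hx.2.le⟩, hx.2]
  · rw [← hs.pressure_eq x hx₀]
    have := hs.pressure_nonneg x hx₀
    positivity

theorem ν_le (hs : ShellSolution Λ χ₁ a C R W W' ν N N' ρ p pt)
    (hsmall : Λ * (R a + (χ₁ - a)) ^ 2 < 1) (hW : ∀ x ∈ Icc 0 χ₁, 0 < W x) :
    ∀ x ∈ Icc a χ₁, ν x ≤ ν χ₁ + lapseSlope Λ (R a + (χ₁ - a)) * (χ₁ - a) := by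
  intro x hx
  have h := mul_sub_le_image_sub_of_le_hasDerivAt hx.2
    (hs.continuousOn_ν.mono (Icc_subset_Ioc (hs.a_pos.trans_le hx.1) le_rfl))
    (fun y hy => hs.hasDerivAt_ν y ⟨hs.a_pos.trans (hx.1.trans_lt hy.1), hy.2⟩)
    fun y hy => hs.neg_lapseSlope_le_N hsmall hW y ⟨hx.1.trans_lt hy.1, hy.2⟩
  have hK : 0 ≤ lapseSlope Λ (R a + (χ₁ - a)) := by
    have := hs.Λ_nonneg
    have := hs.R_pos a ⟨hs.a_pos, hs.a_lt.le⟩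
    have := hs.a_lt
    unfold lapseSlope
    have : 0 ≤ R a + (χ₁ - a) := by linarith
    positivity
  nlinarith [hx.1]

/-- The function differentiated is `(R² e^ν)'`. -/
theorem hasDerivAt_flux (hs : ShellSolution Λ χ₁ a C R W W' ν N N' ρ p pt) {x : ℝ}
    (hx : x ∈ Ioo 0 χ₁) :
    HasDerivAt (fun y => exp (ν y) * (2 * R y * W y + R y ^ 2 * N y))
      (exp (ν x) * (4 * π * (3 * p x + 2 * pt x - ρ x) * R x ^ 2 + 2 - 3 * Λ * R x ^ 2)) x := by
  have hR := hs.hasDerivAt_R x hx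
  have hd := (hs.hasDerivAt_ν x hx).exp.fun_mul
    (((hR.const_mul 2).fun_mul (hs.hasDerivAt_W x hx)).fun_add
      ((hR.fun_pow 2).fun_mul (hs.hasDerivAt_N x hx)))
  refine hd.congr_deriv ?_
  push_cast
  linear_combination (-exp (ν x) / 2) * (3 * hs.pressure_eq x hx
    + 2 * R x * hs.tangentialPressure_eq x hx - hs.density_eq x hx)

theorem flux_sub_le (hs : ShellSolution Λ χ₁ a C R W W' ν N N' ρ p pt)
    (hsmall : Λ * (R a + (χ₁ - a)) ^ 2 < 1) (hW : ∀ x ∈ Icc 0 χ₁, 0 < W x) :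
    exp (ν χ₁) * (2 * R χ₁ * W χ₁ + R χ₁ ^ 2 * N χ₁)
        - exp (ν a) * (2 * R a * W a + R a ^ 2 * N a)
      ≤ (8 * π * C + 2) * exp (ν χ₁ + lapseSlope Λ (R a + (χ₁ - a)) * (χ₁ - a)) * (χ₁ - a) := by
  have hsub : Icc a χ₁ ⊆ Icc 0 χ₁ := Icc_subset_Icc_left hs.a_pos.le
  have hsub' : Icc a χ₁ ⊆ Ioc 0 χ₁ := Icc_subset_Ioc hs.a_pos le_rfl
  have hcont : ContinuousOn (fun y => exp (ν y) * (2 * R y * W y + R y ^ 2 * N y)) (Icc a χ₁) := by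
    have := hs.continuousOn_R.mono hsub
    have := hs.continuousOn_W.mono hsub
    have := hs.continuousOn_ν.mono hsub'
    have := hs.continuousOn_N.mono hsub'
    fun_prop
  refine image_sub_le_mul_sub_of_hasDerivAt_le hs.a_lt.le hcont
    (fun x hx => hs.hasDerivAt_flux ⟨hs.a_pos.trans hx.1, hx.2⟩) fun x hx => ?_
  have hx₀ : x ∈ Ioo 0 χ₁ := ⟨hs.a_pos.trans hx.1, hx.2⟩
  have hC := hs.pressure_le x hx₀
  have hec := hs.energy_condition x hx₀
  have hΛ := hs.Λ_nonneg
  have hν := exp_le_exp.2 (hs.ν_le hsmall hW x (Ioo_subset_Icc_self hx))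
  have hbracket : 4 * π * (3 * p x + 2 * pt x - ρ x) * R x ^ 2 + 2 - 3 * Λ * R x ^ 2
      ≤ 8 * π * C + 2 := by
    nlinarith [pi_pos, sq_nonneg (R x), mul_nonneg pi_pos.le (sq_nonneg (R x)),
      mul_nonneg (mul_nonneg pi_pos.le (sq_nonneg (R x))) (by linarith : 0 ≤ ρ x - p x - 2 * pt x)]
  have hC₀ : 0 ≤ 8 * π * C + 2 := by
    have := hs.pressure_nonneg x hx₀
    nlinarith [pi_pos, mul_nonneg (sq_nonneg (R x)) this]
  calc exp (ν x) * (4 * π * (3 * p x + 2 * pt x - ρ x) * R x ^ 2 + 2 - 3 * Λ * R x ^ 2)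
      ≤ exp (ν x) * (8 * π * C + 2) := by gcongr
    _ ≤ _ := by rw [mul_comm]; gcongr

theorem R_mul_W_mul_N_eq (hs : ShellSolution Λ χ₁ a C R W W' ν N N' ρ p pt) :
    R a * W a * N a = -(Λ * R a ^ 2 / 3) := by
  have hcont : ContinuousOn (fun x => R x * W x * N x + Λ * R x ^ 2 / 3) (Ioc 0 a) := by
    have hsub : Ioc 0 a ⊆ Icc 0 χ₁ := Ioc_subset_Icc_self.trans (Icc_subset_Icc_right hs.a_lt.le)
    have := hs.continuousOn_R.mono hsub
    have := hs.continuousOn_W.mono hsub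
    have := hs.continuousOn_N.mono (Ioc_subset_Ioc_right hs.a_lt.le)
    fun_prop
  have heq : EqOn (fun x => R x * W x * N x + Λ * R x ^ 2 / 3) 0 (Ioo 0 a) := by
    intro x hx
    have hx₀ : x ∈ Ioo 0 χ₁ := ⟨hx.1, hx.2.trans hs.a_lt⟩
    have hm := sq_eq_of_quasilocalMass_eq_zero (hs.R_pos x (Ioo_subset_Ioc_self hx₀))
      (hs.mass_eq_zero x (Ioo_subset_Icc_self hx))
    have hp := hs.pressure_eq x hx₀
    rw [(hs.vacuum x hx).2] at hp
    simp only [Pi.zero_apply]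
    linarith
  have := heq.of_subset_closure hcont continuousOn_const Ioo_subset_Ioc_self
    (by rw [closure_Ioo hs.a_pos.ne]; exact Ioc_subset_Icc_self) ⟨hs.a_pos, le_rfl⟩
  simp only [Pi.zero_apply] at this
  linarith

theorem flux_at_a (hs : ShellSolution Λ χ₁ a C R W W' ν N N' ρ p pt)
    (hW : ∀ x ∈ Icc 0 χ₁, 0 < W x) :
    exp (ν a) * (2 * R a * W a + R a ^ 2 * N a)
      = exp (ν a) * (R a * (2 - Λ * R a ^ 2) / √(1 - Λ * R a ^ 2 / 3)) := by
  have hWa := hW a ⟨hs.a_pos.le, hs.a_lt.le⟩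
  have hm := sq_eq_of_quasilocalMass_eq_zero (hs.R_pos a ⟨hs.a_pos, hs.a_lt.le⟩)
    (hs.mass_eq_zero a ⟨hs.a_pos.le, le_rfl⟩)
  have hRWN := hs.R_mul_W_mul_N_eq
  rw [← hm, sqrt_sq hWa.le]
  congr 1
  field_simp
  linear_combination R a * hRWN + 2 * R a * hm

theorem pressure_boundary (hs : ShellSolution Λ χ₁ a C R W W' ν N N' ρ p pt) :
    1 - W χ₁ ^ 2 - Λ * R χ₁ ^ 2 ≤ 2 * R χ₁ * W χ₁ * N χ₁ := by
  have hχ₁ : χ₁ ∈ Ioc 0 χ₁ := ⟨hs.χ₁_pos, le_rfl⟩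
  have hsub : Ioo 0 χ₁ ⊆ Icc 0 χ₁ := Ioo_subset_Icc_self
  have hR := (hs.continuousOn_R χ₁ (Ioc_subset_Icc_self hχ₁)).mono hsub
  have hW := (hs.continuousOn_W χ₁ (Ioc_subset_Icc_self hχ₁)).mono hsub
  have hN := (hs.continuousOn_N χ₁ hχ₁).mono (Ioo_subset_Ioc_self : Ioo 0 χ₁ ⊆ Ioc 0 χ₁)
  refine ContinuousWithinAt.closure_le (f := fun x => 1 - W x ^ 2 - Λ * R x ^ 2)
    (g := fun x => 2 * R x * W x * N x) (s := Ioo 0 χ₁)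
    (by simp [closure_Ioo hs.χ₁_pos.ne, hs.χ₁_pos.le])
    (by fun_prop) (by fun_prop) fun x hx => ?_
  have := hs.pressure_eq x hx
  have := hs.pressure_nonneg x hx
  nlinarith [pi_pos, mul_nonneg (mul_nonneg pi_pos.le this) (sq_nonneg (R x))]

theorem boundary_ineq (hs : ShellSolution Λ χ₁ a C R W W' ν N N' ρ p pt)
    (hsmall : Λ * (R a + (χ₁ - a)) ^ 2 < 1) (hν₁ : exp (ν χ₁) = |W χ₁|) :
    0 < W χ₁ ∧
      R χ₁ * (1 - Λ * R χ₁ ^ 2 + 3 * W χ₁ ^ 2) / 2 ≤ W χ₁ * shellBound Λ C (R a) (χ₁ - a) := by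
  have hW := hs.W_pos hsmall fun h => by simpa [h] using (exp_pos (ν χ₁)).trans_eq hν₁
  have hv : 0 < W χ₁ := hW χ₁ ⟨hs.χ₁_pos.le, le_rfl⟩
  rw [abs_of_pos hv] at hν₁
  refine ⟨hv, ?_⟩
  set K := lapseSlope Λ (R a + (χ₁ - a))
  set Q := R a * (2 - Λ * R a ^ 2) / √(1 - Λ * R a ^ 2 / 3)
  have hRa := hs.R_pos a ⟨hs.a_pos, hs.a_lt.le⟩
  have hQ : 0 ≤ Q := by
    have : Λ * R a ^ 2 ≤ Λ * (R a + (χ₁ - a)) ^ 2 := by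
      have := hs.Λ_nonneg; have := hs.a_lt; gcongr; linarith
    have : 0 ≤ 2 - Λ * R a ^ 2 := by linarith
    positivity
  have hflux₁ : R χ₁ * (1 - Λ * R χ₁ ^ 2 + 3 * W χ₁ ^ 2) / 2
      ≤ exp (ν χ₁) * (2 * R χ₁ * W χ₁ + R χ₁ ^ 2 * N χ₁) := by
    have := mul_le_mul_of_nonneg_left hs.pressure_boundary
      (hs.R_pos χ₁ ⟨hs.χ₁_pos, le_rfl⟩).le
    rw [hν₁]
    nlinarith
  have hexp_a : exp (ν a) ≤ W χ₁ * exp (K * (χ₁ - a)) := by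
    rw [← hν₁, ← exp_add]
    exact exp_le_exp.2 (hs.ν_le hsmall hW a ⟨le_rfl, hs.a_lt.le⟩)
  calc R χ₁ * (1 - Λ * R χ₁ ^ 2 + 3 * W χ₁ ^ 2) / 2
      ≤ exp (ν a) * Q + (8 * π * C + 2) * exp (ν χ₁ + K * (χ₁ - a)) * (χ₁ - a) := by
        linarith [hs.flux_sub_le hsmall hW, hs.flux_at_a hW]
    _ ≤ W χ₁ * exp (K * (χ₁ - a)) * Q
          + (8 * π * C + 2) * (W χ₁ * exp (K * (χ₁ - a))) * (χ₁ - a) := by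
        rw [exp_add, hν₁]; gcongr
    _ = W χ₁ * shellBound Λ C (R a) (χ₁ - a) := by
        unfold shellBound; ring

end ShellSolution

theorem ShellSolution.of_contDiffOn {Λ χ₁ a C : ℝ} {R ν ρ p pt : ℝ → ℝ} (hΛ : 0 ≤ Λ)
    (ha : 0 < a) (haχ₁ : a < χ₁)
    (hR1 : ContDiffOn ℝ 1 R (Icc 0 χ₁)) (hR2 : ContDiffOn ℝ 2 R (Ioc 0 χ₁))
    (hν : ContDiffOn ℝ 2 ν (Ioc 0 χ₁)) (hRpos : ∀ χ ∈ Ioc 0 χ₁, 0 < R χ)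
    (hR0 : R 0 = 0) (hR'0 : deriv R 0 = 1)
    (hρdef : ∀ χ ∈ Ioc 0 χ₁,
      8 * π * ρ χ = (1 - (deriv R χ) ^ 2 - 2 * R χ * deriv (deriv R) χ) / (R χ) ^ 2 - Λ)
    (hpdef : ∀ χ ∈ Ioc 0 χ₁,
      8 * π * p χ = ((deriv R χ) ^ 2 - 1 + 2 * R χ * deriv R χ * deriv ν χ) / (R χ) ^ 2 + Λ)
    (hptdef : ∀ χ ∈ Ioc 0 χ₁,
      8 * π * pt χ = (deriv ν χ * deriv R χ + R χ * ((deriv ν χ) ^ 2 + deriv (deriv ν) χ)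
        + deriv (deriv R) χ) / R χ + Λ)
    (hρpos : ∀ χ ∈ Ioc 0 χ₁, 0 ≤ ρ χ) (hppos : ∀ χ ∈ Ioc 0 χ₁, 0 ≤ p χ)
    (hec : ∀ χ ∈ Ioc 0 χ₁, p χ + 2 * pt χ ≤ ρ χ)
    (hsupp : ∀ χ ∈ Ioc 0 χ₁, χ < a → ρ χ = 0 ∧ p χ = 0 ∧ pt χ = 0)
    (hbound : ∀ χ ∈ Ioc 0 χ₁, (R χ) ^ 2 * p χ ≤ C) :
    ShellSolution Λ χ₁ a C R (derivWithin R (Icc 0 χ₁)) (deriv (deriv R))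
      ν (derivWithin ν (Ioc 0 χ₁)) (deriv (deriv ν)) ρ p pt := by
  have hχ₁ : 0 < χ₁ := ha.trans haχ₁
  have hIcc : ∀ x ∈ Ioo 0 χ₁, Icc 0 χ₁ ∈ 𝓝 x := fun x hx => Icc_mem_nhds hx.1 hx.2
  have hIoc : ∀ x ∈ Ioo 0 χ₁, Ioc 0 χ₁ ∈ 𝓝 x := fun x hx => Ioc_mem_nhds hx.1 hx.2
  have hW : ∀ x ∈ Ioo 0 χ₁, derivWithin R (Icc 0 χ₁) x = deriv R x :=
    fun x hx => derivWithin_of_mem_nhds (hIcc x hx)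
  have hN : ∀ x ∈ Ioo 0 χ₁, derivWithin ν (Ioc 0 χ₁) x = deriv ν x :=
    fun x hx => derivWithin_of_mem_nhds (hIoc x hx)
  have hR : ∀ x ∈ Ioo 0 χ₁, R x ≠ 0 := fun x hx => (hRpos x (Ioo_subset_Ioc_self hx)).ne'
  exact
  { Λ_nonneg := hΛ
    a_pos := ha
    a_lt := haχ₁
    continuousOn_R := hR1.continuousOn
    continuousOn_W := hR1.continuousOn_derivWithin (uniqueDiffOn_Icc hχ₁) le_rfl
    continuousOn_ν := hν.continuousOn
    continuousOn_N := hν.continuousOn_derivWithin (uniqueDiffOn_Ioc 0 χ₁) (by norm_num)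
    hasDerivAt_R := fun x hx => hR1.hasDerivAt_derivWithin (hIcc x hx)
    hasDerivAt_W := fun x hx => hR2.hasDerivAt_derivWithin_deriv_deriv (hIoc x hx) (hIcc x hx)
    hasDerivAt_ν := fun x hx => (hν.of_le (by norm_num)).hasDerivAt_derivWithin (hIoc x hx)
    hasDerivAt_N := fun x hx => hν.hasDerivAt_derivWithin_deriv_deriv (hIoc x hx) (hIoc x hx)
    R_zero := hR0
    W_zero := by
      rw [derivWithin_eq_deriv_of_ne_zero (uniqueDiffOn_Icc hχ₁ 0 (left_mem_Icc.2 hχ₁.le))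
        (by rw [hR'0]; exact one_ne_zero), hR'0]
    R_pos := hRpos
    density_eq := fun x hx => by
      have := hR x hx
      rw [hW x hx, hρdef x (Ioo_subset_Ioc_self hx)]
      field_simp
    pressure_eq := fun x hx => by
      have := hR x hx
      rw [hW x hx, hN x hx, hpdef x (Ioo_subset_Ioc_self hx)]
      field_simp
    tangentialPressure_eq := fun x hx => by
      have := hR x hx
      rw [hW x hx, hN x hx, hptdef x (Ioo_subset_Ioc_self hx)]
      field_simp
    density_nonneg := fun x hx => hρpos x (Ioo_subset_Ioc_self hx)
    pressure_nonneg := fun x hx => hppos x (Ioo_subset_Ioc_self hx)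
    energy_condition := fun x hx => hec x (Ioo_subset_Ioc_self hx)
    vacuum := fun x hx =>
      (hsupp x ⟨hx.1, hx.2.le.trans haχ₁.le⟩ hx.2).imp_right And.left
    pressure_le := fun x hx => hbound x (Ioo_subset_Ioc_self hx) }

theorem tendsto_shellBound {ι : Type*} {l : Filter ι} {Λ C R₁ : ℝ} {r δ : ι → ℝ}
    (hΛR : Λ * R₁ ^ 2 < 1) (hr : Tendsto r l (𝓝 R₁)) (hδ : Tendsto δ l (𝓝 0)) :
    Tendsto (fun k => shellBound Λ C (r k) (δ k)) l
      (𝓝 (R₁ * (2 - Λ * R₁ ^ 2) / √(1 - Λ * R₁ ^ 2 / 3))) := by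
  have hK : ContinuousAt (lapseSlope Λ) R₁ :=
    ContinuousAt.div (by fun_prop) (by fun_prop)
      (mul_ne_zero three_ne_zero (sqrt_pos.2 (by linarith)).ne')
  have hQ : ContinuousAt (fun r => r * (2 - Λ * r ^ 2) / √(1 - Λ * r ^ 2 / 3)) R₁ :=
    ContinuousAt.div (by fun_prop) (by fun_prop) (sqrt_pos.2 (by nlinarith [sq_nonneg R₁])).ne'
  have hexp : Tendsto (fun k => lapseSlope Λ (r k + δ k) * δ k) l (𝓝 0) := by
    simpa using (hK.tendsto.comp (by simpa using hr.add hδ)).mul hδ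
  simpa [shellBound] using
    ((continuous_exp.tendsto 0).comp hexp).mul ((hQ.tendsto.comp hr).add (hδ.const_mul _))

theorem le_of_tendsto_boundary_ineq {ι : Type*} {l : Filter ι} [l.NeBot] {Λ C R₁ V : ℝ}
    {v r δ : ι → ℝ} (hR₁ : 0 < R₁) (hΛR : Λ * R₁ ^ 2 < 1)
    (hv : Tendsto (fun k => v k ^ 2) l (𝓝 V)) (hr : Tendsto r l (𝓝 R₁))
    (hδ : Tendsto δ l (𝓝 0))
    (h : ∀ᶠ k in l, 0 < v k ∧
      R₁ * (1 - Λ * R₁ ^ 2 + 3 * v k ^ 2) / 2 ≤ v k * shellBound Λ C (r k) (δ k)) :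
    (1 - Λ * R₁ ^ 2 + 3 * V) * √(1 - Λ * R₁ ^ 2 / 3) ≤ 2 * (2 - Λ * R₁ ^ 2) * √V := by
  have hv' : Tendsto v l (𝓝 √V) := hv.sqrt.congr' (h.mono fun k hk => sqrt_sq hk.1.le)
  have hlim := le_of_tendsto_of_tendsto
    (((tendsto_const_nhds.add (hv.const_mul 3)).const_mul R₁).div_const 2)
    (hv'.mul (tendsto_shellBound hΛR hr hδ)) (h.mono fun k hk => hk.2)
  have hu : 0 < √(1 - Λ * R₁ ^ 2 / 3) := sqrt_pos.2 (by nlinarith [sq_nonneg R₁])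
  rw [mul_div_assoc', le_div_iff₀ hu] at hlim
  nlinarith

theorem sq_le_of_boundary_ineq {x v : ℝ} (hx : x < 1)
    (h : (1 - x + 3 * v ^ 2) * √(1 - x / 3) ≤ 2 * (2 - x) * v) :
    (1 - x) ^ 2 ≤ 3 * (3 - x) * v ^ 2 := by
  set u := √(1 - x / 3)
  have hu2 : u ^ 2 = 1 - x / 3 := sq_sqrt (by linarith)
  have hu : 0 < u := sqrt_pos.2 (by linarith)
  have hw : (3 * u * v - (1 - x)) * (3 * u * v - (3 - x)) ≤ 0 := by
    nlinarith [mul_le_mul_of_nonneg_left h hu.le]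
  have hw1 : 1 - x ≤ 3 * u * v := by
    by_contra! hlt
    nlinarith
  calc (1 - x) ^ 2 ≤ (3 * u * v) ^ 2 := by gcongr
    _ = 3 * (3 - x) * v ^ 2 := by rw [mul_pow, mul_pow, hu2]; ring

theorem thinShellMass_lt_compactnessBound {x : ℝ} (hx0 : 0 < x) (hx1 : x < 1) :
    (1 - x / 3 - (1 - x) ^ 2 / (3 * (3 - x))) / 2 < 2 / 9 - x / 3 + 2 / 9 * √(1 + 3 * x) := by
  set t := √(1 + 3 * x)
  have ht : 0 ≤ t := sqrt_nonneg _
  have ht2 : t ^ 2 = 1 + 3 * x := sq_sqrt (by linarith)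
  have hq : 6 + 5 * x - 3 * x ^ 2 < 2 * t * (3 - x) := by
    refine lt_of_pow_lt_pow_left₀ 2 (mul_nonneg (by positivity) (by linarith)) ?_
    -- the difference of the squares is `3x(1 - x)²(8 - 3x)`
    have : 0 < 3 * x * (1 - x) ^ 2 * (8 - 3 * x) := by
      have : 0 < 1 - x := by linarith
      have : 0 < 8 - 3 * x := by linarith
      positivity
    nlinarith
  have h3 : (0 : ℝ) < 3 - x := by linarith
  have hid : (1 - x / 3 - (1 - x) ^ 2 / (3 * (3 - x))) / 2
      = 2 / 9 - x / 3 + (6 + 5 * x - 3 * x ^ 2) / (9 * (3 - x)) := by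
    field_simp
    ring
  rw [hid, add_lt_add_iff_left, div_lt_iff₀ (by positivity)]
  linarith

theorem mass_lt_compactnessBound {x V : ℝ} (hx0 : 0 < x) (hx1 : x < 1) (hV : 0 ≤ V)
    (h : (1 - x + 3 * V) * √(1 - x / 3) ≤ 2 * (2 - x) * √V) :
    (1 - x / 3 - V) / 2 < 2 / 9 - x / 3 + 2 / 9 * √(1 + 3 * x) := by
  have hsq := sq_le_of_boundary_ineq hx1 (by rwa [sq_sqrt hV])
  rw [sq_sqrt hV] at hsq
  have : (1 - x) ^ 2 / (3 * (3 - x)) ≤ V := (div_le_iff₀ (by linarith)).2 (by linarith)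
  linarith [thinShellMass_lt_compactnessBound hx0 hx1]

theorem thin_shell_not_saturating_general
    (Λ χ₁ R₁ M : ℝ) (hΛ : 0 < Λ) (hχ₁ : 0 < χ₁) (hR₁ : 0 < R₁)
    (hΛR : Λ * R₁ ^ 2 < 1)
    (R ν ρ p pt m : ℕ → ℝ → ℝ) (χ₀ : ℕ → ℝ)
    (hR1 : ∀ k, ContDiffOn ℝ 1 (R k) (Icc 0 χ₁))
    (hR2 : ∀ k, ContDiffOn ℝ 2 (R k) (Ioc 0 χ₁))
    (hν : ∀ k, ContDiffOn ℝ 2 (ν k) (Ioc 0 χ₁))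
    (hRpos : ∀ k, ∀ χ ∈ Ioc 0 χ₁, 0 < R k χ)
    (hR0 : ∀ k, R k 0 = 0) (hR'0 : ∀ k, deriv (R k) 0 = 1)
    (hρdef : ∀ k, ∀ χ ∈ Ioc 0 χ₁,
      8 * π * ρ k χ =
        (1 - (deriv (R k) χ) ^ 2 - 2 * R k χ * deriv (deriv (R k)) χ)
          / (R k χ) ^ 2 - Λ)
    (hpdef : ∀ k, ∀ χ ∈ Ioc 0 χ₁,
      8 * π * p k χ =
        ((deriv (R k) χ) ^ 2 - 1 + 2 * R k χ * deriv (R k) χ * deriv (ν k) χ)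
          / (R k χ) ^ 2 + Λ)
    (hptdef : ∀ k, ∀ χ ∈ Ioc 0 χ₁,
      8 * π * pt k χ =
        (deriv (ν k) χ * deriv (R k) χ
            + R k χ * ((deriv (ν k) χ) ^ 2 + deriv (deriv (ν k)) χ)
            + deriv (deriv (R k)) χ) / R k χ + Λ)
    (hmdef : ∀ k, ∀ χ ∈ Ioc 0 χ₁,
      m k χ = R k χ / 2 * (1 - (deriv (R k) χ) ^ 2) - Λ / 6 * (R k χ) ^ 3)
    (hρpos : ∀ k, ∀ χ ∈ Ioc 0 χ₁, 0 ≤ ρ k χ)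
    (hppos : ∀ k, ∀ χ ∈ Ioc 0 χ₁, 0 ≤ p k χ)
    (hec : ∀ k, ∀ χ ∈ Ioc 0 χ₁, p k χ + 2 * pt k χ ≤ ρ k χ)
    (hχ₀ : ∀ k, 0 < χ₀ k ∧ χ₀ k < χ₁)
    (hχ₀lim : Tendsto χ₀ atTop (nhds χ₁))
    (hsupp : ∀ k, ∀ χ ∈ Ioc 0 χ₁, χ < χ₀ k →
      ρ k χ = 0 ∧ p k χ = 0 ∧ pt k χ = 0)
    (hbound : ∃ C : ℝ, ∀ k, ∀ χ ∈ Ioc 0 χ₁, (R k χ) ^ 2 * p k χ ≤ C)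
    (hRb : ∀ k, R k χ₁ = R₁)
    (hR₀lim : Tendsto (fun k => R k (χ₀ k)) atTop (nhds R₁))
    (hνb : ∀ k, Real.exp (ν k χ₁) =
      Real.sqrt (1 - 2 * m k χ₁ / R₁ - Λ * R₁ ^ 2 / 3))
    (hM : Tendsto (fun k => m k χ₁) atTop (nhds M)) :
    M / R₁ < 2 / 9 - Λ * R₁ ^ 2 / 3
      + 2 / 9 * Real.sqrt (1 + 3 * Λ * R₁ ^ 2) := by
  obtain ⟨C, hC⟩ := hbound
  have hv : ∀ k, deriv (R k) χ₁ ^ 2 = 1 - 2 * m k χ₁ / R₁ - Λ * R₁ ^ 2 / 3 := fun k => by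
    rw [hmdef k χ₁ ⟨hχ₁, le_rfl⟩, hRb k]
    exact sq_eq_of_quasilocalMass _ hR₁.ne'
  have hexp : ∀ k, exp (ν k χ₁) = |deriv (R k) χ₁| := fun k => by
    rw [hνb k, ← hv k, sqrt_sq_eq_abs]
  have hW : ∀ k, derivWithin (R k) (Icc 0 χ₁) χ₁ = deriv (R k) χ₁ := fun k =>
    derivWithin_eq_deriv_of_ne_zero (uniqueDiffOn_Icc hχ₁ χ₁ ⟨hχ₁.le, le_rfl⟩)
      (abs_pos.1 (hexp k ▸ exp_pos _))
  have hδ : Tendsto (fun k => χ₁ - χ₀ k) atTop (𝓝 0) := by simpa using hχ₀lim.const_sub χ₁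
  have hkey : ∀ᶠ k in atTop, 0 < deriv (R k) χ₁ ∧ R₁ * (1 - Λ * R₁ ^ 2 + 3 * deriv (R k) χ₁ ^ 2) / 2
      ≤ deriv (R k) χ₁ * shellBound Λ C (R k (χ₀ k)) (χ₁ - χ₀ k) := by
    filter_upwards [(tendsto_const_nhds.mul ((hR₀lim.add hδ).pow 2)).eventually_lt_const
      (by simpa using hΛR)] with k hk
    have hs := ShellSolution.of_contDiffOn hΛ.le (hχ₀ k).1 (hχ₀ k).2 (hR1 k) (hR2 k) (hν k)
      (hRpos k) (hR0 k) (hR'0 k) (hρdef k) (hpdef k) (hptdef k) (hρpos k) (hppos k) (hec k)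
      (hsupp k) (hC k)
    simpa only [hW k, hRb k] using hs.boundary_ineq hk (by rw [hW k, hexp k])
  have hv2 : Tendsto (fun k => deriv (R k) χ₁ ^ 2) atTop (𝓝 (1 - 2 * M / R₁ - Λ * R₁ ^ 2 / 3)) :=
    ((tendsto_const_nhds.sub ((hM.const_mul 2).div_const R₁)).sub tendsto_const_nhds).congr
      fun k => (hv k).symm
  have := mass_lt_compactnessBound (by positivity) hΛR (ge_of_tendsto' hv2 fun k => sq_nonneg _)
    (le_of_tendsto_boundary_ineq hR₁ hΛR hv2 hR₀lim hδ hkey)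
  rw [show 1 + 3 * Λ * R₁ ^ 2 = 1 + 3 * (Λ * R₁ ^ 2) by ring]
  convert this using 1
  ring

/-- Infinitely thin shells do not saturate the compactness bound when
`0 < ΛR₁² < 1`: for a sequence of regular static solutions approaching an
infinitely thin shell of area radius `R₁` and mass `M`, the strict inequality
`M/R₁ < 2/9 − ΛR₁²/3 + (2/9)√(1 + 3ΛR₁²)` holds. -/
theorem thin_shell_not_saturating
    (Λ χ₁ R₁ M : ℝ) (hΛ : 0 < Λ) (hχ₁ : 0 < χ₁) (hR₁ : 0 < R₁)
    (hΛR : Λ * R₁ ^ 2 < 1)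
    (R ν ρ p pt m : ℕ → ℝ → ℝ) (χ₀ : ℕ → ℝ)
    (hR1 : ∀ k, ContDiffOn ℝ 1 (R k) (Icc 0 χ₁))
    (hR2 : ∀ k, ContDiffOn ℝ 2 (R k) (Ioc 0 χ₁))
    (hν : ∀ k, ContDiffOn ℝ 2 (ν k) (Ioc 0 χ₁))
    (hRpos : ∀ k, ∀ χ ∈ Ioc 0 χ₁, 0 < R k χ)
    (hR0 : ∀ k, R k 0 = 0) (hR'0 : ∀ k, deriv (R k) 0 = 1)
    (hρdef : ∀ k, ∀ χ ∈ Ioc 0 χ₁,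
      8 * π * ρ k χ =
        (1 - (deriv (R k) χ) ^ 2 - 2 * R k χ * deriv (deriv (R k)) χ)
          / (R k χ) ^ 2 - Λ)
    (hpdef : ∀ k, ∀ χ ∈ Ioc 0 χ₁,
      8 * π * p k χ =
        ((deriv (R k) χ) ^ 2 - 1 + 2 * R k χ * deriv (R k) χ * deriv (ν k) χ)
          / (R k χ) ^ 2 + Λ)
    (hptdef : ∀ k, ∀ χ ∈ Ioc 0 χ₁,
      8 * π * pt k χ =
        (deriv (ν k) χ * deriv (R k) χ
            + R k χ * ((deriv (ν k) χ) ^ 2 + deriv (deriv (ν k)) χ)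
            + deriv (deriv (R k)) χ) / R k χ + Λ)
    (hmdef : ∀ k, ∀ χ ∈ Ioc 0 χ₁,
      m k χ = R k χ / 2 * (1 - (deriv (R k) χ) ^ 2) - Λ / 6 * (R k χ) ^ 3)
    (hρpos : ∀ k, ∀ χ ∈ Ioc 0 χ₁, 0 ≤ ρ k χ)
    (hppos : ∀ k, ∀ χ ∈ Ioc 0 χ₁, 0 ≤ p k χ)
    (hec : ∀ k, ∀ χ ∈ Ioc 0 χ₁, p k χ + 2 * pt k χ ≤ ρ k χ)
    (hχ₀ : ∀ k, 0 < χ₀ k ∧ χ₀ k < χ₁)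
    (hχ₀lim : Tendsto χ₀ atTop (nhds χ₁))
    (hsupp : ∀ k, ∀ χ ∈ Ioc 0 χ₁, χ < χ₀ k →
      ρ k χ = 0 ∧ p k χ = 0 ∧ pt k χ = 0)
    (hbound : ∃ C : ℝ, ∀ k, ∀ χ ∈ Ioc 0 χ₁, (R k χ) ^ 2 * p k χ ≤ C)
    (hint : Tendsto
      (fun k => ∫ χ in (χ₀ k)..χ₁, (ρ k χ - 2 * pt k χ) * (R k χ) ^ 2)
      atTop (nhds 0))
    (hRb : ∀ k, R k χ₁ = R₁)
    (hR₀lim : Tendsto (fun k => R k (χ₀ k)) atTop (nhds R₁))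
    (hνb : ∀ k, Real.exp (ν k χ₁) =
      Real.sqrt (1 - 2 * m k χ₁ / R₁ - Λ * R₁ ^ 2 / 3))
    (hM : Tendsto (fun k => m k χ₁) atTop (nhds M)) :
    M / R₁ < 2 / 9 - Λ * R₁ ^ 2 / 3
      + 2 / 9 * Real.sqrt (1 + 3 * Λ * R₁ ^ 2) :=
  thin_shell_not_saturating_general Λ χ₁ R₁ M hΛ hχ₁ hR₁ hΛR R ν ρ p pt m χ₀ hR1 hR2 hν hRpos hR0
    hR'0 hρdef hpdef hptdef hmdef hρpos hppos hec hχ₀ hχ₀lim hsupp hbound hRb hR₀lim hνb hM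
end

section
/- Let μ ≥ 0 and z > 0 be real numbers with 2μ + z/3 ≤ 1, and set s := √(1 − 2μ − z/3). If μ − z/3 = 2s(1 − s), then (3μ/2 + z/2)² = (2/3)·(3μ/2 + z), and consequently μ = 2/9 − z/3 + (2/9)·√(1 + 3z). -/
/-!
Writing `s = √(1 - 2μ - z/3)`, the two relations `s² = 1 - 2μ - z/3` and `μ - z/3 = 2s(1 - s)`
are linear in `(μ, z)` and parametrize the shell by `s`:
`z = (1 - s)(1 - 3s)` and `μ = (1 - s)(1 + 3s)/3`. Both sides of the quadratic identity are then
`(1 - s)²`, and `1 + 3z = (2 - 3s)²`. The positivity of `μ` and `z` forces `s < 1/3`, so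
`√(1 + 3z) = 2 - 3s`, which turns the compactness bound into a polynomial identity in `s`.
-/

open Real

namespace ThinShell

lemma eq_param_of_sq_eq {μ z s : ℝ} (hs : s ^ 2 = 1 - 2 * μ - z / 3)
    (hid : μ - z / 3 = 2 * s * (1 - s)) :
    z = (1 - s) * (1 - 3 * s) ∧ μ = (1 - s) * (1 + 3 * s) / 3 :=
  ⟨by linear_combination hs - 2 * hid, by linear_combination (hs + hid) / 3⟩

lemma lt_one_third_of_param_pos {s : ℝ} (hs : 0 ≤ s) (hμ : 0 ≤ (1 - s) * (1 + 3 * s) / 3)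
    (hz : 0 < (1 - s) * (1 - 3 * s)) : s < 1 / 3 := by
  have h1s : 0 ≤ 1 - s := by nlinarith
  by_contra! h
  nlinarith

lemma sqrt_one_add_three_mul_param {s : ℝ} (hs : s ≤ 2 / 3) :
    √(1 + 3 * ((1 - s) * (1 - 3 * s))) = 2 - 3 * s := by
  rw [show 1 + 3 * ((1 - s) * (1 - 3 * s)) = (2 - 3 * s) ^ 2 by ring, sqrt_sq (by linarith)]

theorem saturation_of_sq_eq {μ z s : ℝ} (hs0 : 0 ≤ s) (hs : s ^ 2 = 1 - 2 * μ - z / 3)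
    (hμ : 0 ≤ μ) (hz : 0 < z) (hid : μ - z / 3 = 2 * s * (1 - s)) :
    (3 / 2 * μ + 1 / 2 * z) ^ 2 = 2 / 3 * (3 / 2 * μ + z) ∧
    μ = 2 / 9 - z / 3 + 2 / 9 * √(1 + 3 * z) := by
  obtain ⟨rfl, rfl⟩ := eq_param_of_sq_eq hs hid
  have hs3 : s < 1 / 3 := lt_one_third_of_param_pos hs0 hμ hz
  rw [sqrt_one_add_three_mul_param (by linarith)]
  constructor <;> ring

end ThinShell

/-- Degenerate case `h = 0` of the thin-shell limit identity: if `μ ≥ 0`,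
`z > 0`, `2μ + z/3 ≤ 1`, `s = √(1 − 2μ − z/3)` and `μ − z/3 = 2s(1 − s)`,
then `(3μ/2 + z/2)² = (2/3)(3μ/2 + z)` and `μ = 2/9 − z/3 + (2/9)√(1 + 3z)`. -/
theorem thin_shell_saturation_case
    (μ z : ℝ) (hμ : 0 ≤ μ) (hz : 0 < z) (h1 : 2 * μ + z / 3 ≤ 1)
    (hid : μ - z / 3 =
      2 * Real.sqrt (1 - 2 * μ - z / 3) * (1 - Real.sqrt (1 - 2 * μ - z / 3))) :
    (3 / 2 * μ + 1 / 2 * z) ^ 2 = 2 / 3 * (3 / 2 * μ + z) ∧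
    μ = 2 / 9 - z / 3 + 2 / 9 * Real.sqrt (1 + 3 * z) :=
  ThinShell.saturation_of_sq_eq (sqrt_nonneg _) (sq_sqrt (by linarith)) hμ hz hid
end

section
/- Let μ ≥ 0 and z be real numbers with 0 < z < 1 and 2μ + z/3 ≤ 1, and set s := √(1 − 2μ − z/3) and h := z·s/√(1 − z/3). If μ − z/3 = 2s(1 − s) − h, then μ < 2/9 − z/3 + (2/9)·√(1 + 3z). -/
open Real

/-!
With `s = √(1 − 2μ − z/3)` we have `μ = (1 − z/3 − s²)/2`, and the identity becomes
`3s² − 4s + 1 − z = −2h`. Since `h > 0`, `s` lies strictly above the smaller root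
`(2 − √(1 + 3z))/3` of this quadratic, which is nonnegative because `z < 1`; substituting
this lower bound for `s` into `μ = (1 − z/3 − s²)/2` gives the claimed bound.
-/

lemma sub_sqrt_lt_of_quadratic_neg {z s : ℝ} (hz : 0 ≤ 1 + 3 * z)
    (h : 3 * s ^ 2 - 4 * s + (1 - z) < 0) : 2 - √(1 + 3 * z) < 3 * s := by
  have hsq : (3 * s - 2) ^ 2 < √(1 + 3 * z) ^ 2 := by
    rw [sq_sqrt hz]
    linarith
  linarith [neg_abs_le (3 * s - 2), abs_lt_of_sq_lt_sq hsq (sqrt_nonneg _)]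

lemma half_sub_sq_lt_of_sub_sqrt_lt {z s : ℝ} (hz0 : 0 ≤ 1 + 3 * z) (hz1 : z < 1)
    (hs : 2 - √(1 + 3 * z) < 3 * s) :
    (1 - z / 3 - s ^ 2) / 2 < 2 / 9 - z / 3 + 2 / 9 * √(1 + 3 * z) := by
  have hw_sq : √(1 + 3 * z) ^ 2 = 1 + 3 * z := sq_sqrt hz0
  have hw_le : √(1 + 3 * z) ≤ 2 := by
    rw [sqrt_le_left (by norm_num)]
    linarith
  have hsq : (2 - √(1 + 3 * z)) ^ 2 < (3 * s) ^ 2 :=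
    pow_lt_pow_left₀ hs (by linarith) two_ne_zero
  linarith

theorem thin_shell_strict_inequality_general
    (μ z : ℝ) (hz0 : 0 < z) (hz1 : z < 1) (h1 : 2 * μ + z / 3 ≤ 1)
    (hid : μ - z / 3 =
      2 * Real.sqrt (1 - 2 * μ - z / 3) * (1 - Real.sqrt (1 - 2 * μ - z / 3))
        - z * Real.sqrt (1 - 2 * μ - z / 3) / Real.sqrt (1 - z / 3)) :
    μ < 2 / 9 - z / 3 + 2 / 9 * Real.sqrt (1 + 3 * z) := by
  set s := √(1 - 2 * μ - z / 3)
  have hs_sq : s ^ 2 = 1 - 2 * μ - z / 3 := sq_sqrt (by linarith)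
  have hquad : 3 * s ^ 2 - 4 * s + (1 - z) = -(2 * (z * s / √(1 - z / 3))) := by
    linear_combination 2 * hid - hs_sq
  have hs_pos : 0 < s := by
    refine (sqrt_nonneg _).lt_of_ne' fun hs0 => ?_
    rw [show s = 0 from hs0] at hquad
    norm_num at hquad
    linarith
  have hneg : 3 * s ^ 2 - 4 * s + (1 - z) < 0 := by
    have : 0 < √(1 - z / 3) := sqrt_pos.2 (by linarith)
    rw [hquad, neg_lt_zero]
    positivity
  have hbound := half_sub_sq_lt_of_sub_sqrt_lt (by linarith) hz1
    (sub_sqrt_lt_of_quadratic_neg (by linarith) hneg)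
  linarith

/-- Algebraic core of the Proposition: if `μ ≥ 0`, `0 < z < 1`, `2μ + z/3 ≤ 1`,
`s = √(1 − 2μ − z/3)`, `h = z·s/√(1 − z/3)` and `μ − z/3 = 2s(1 − s) − h`,
then `μ < 2/9 − z/3 + (2/9)√(1 + 3z)`. -/
theorem thin_shell_strict_inequality
    (μ z : ℝ) (hμ : 0 ≤ μ) (hz0 : 0 < z) (hz1 : z < 1) (h1 : 2 * μ + z / 3 ≤ 1)
    (hid : μ - z / 3 =
      2 * Real.sqrt (1 - 2 * μ - z / 3) * (1 - Real.sqrt (1 - 2 * μ - z / 3))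
        - z * Real.sqrt (1 - 2 * μ - z / 3) / Real.sqrt (1 - z / 3)) :
    μ < 2 / 9 - z / 3 + 2 / 9 * Real.sqrt (1 + 3 * z) :=
  thin_shell_strict_inequality_general μ z hz0 hz1 h1 hid
end
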